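/- arXiv:2204.06724 — 8 statements merged into one kernel-verified Lean document; each statement's English description precedes it below -/
import Mathlib

section
/- There is no context C and no L*-formula φ such that both C ⊩⁺ φ and C ⊩⁻ φ. -/
namespace LAD

/-- L-formulas: built from atoms by extensional connectives ⊃, ∩, ∪, ∼. -/
inductive LForm (A : Type) where
  | atom : A → LForm A
  | eimp : LForm A → LForm A → LForm A
  | econj : LForm A → LForm A → LForm A
  | edisj : LForm A → LForm A → LForm A
  | eneg : LForm A → LForm A

/-- L*-formulas: L-formulas closed under intensional connectives →, ∧, ∨, ¬. -/
inductive SForm (A : Type) where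
  | base : LForm A → SForm A
  | iimp : SForm A → SForm A → SForm A
  | iconj : SForm A → SForm A → SForm A
  | idisj : SForm A → SForm A → SForm A
  | ineg : SForm A → SForm A

variable {A : Type}

/-- A possible world: an assignment of truth values to atoms. -/
abbrev World (A : Type) := A → Bool

/-- A context is a (nonempty) set of possible worlds. -/
abbrev Context (A : Type) := Set (World A)

/-- Classical truth of an L-formula at a world. -/
def LForm.truth (w : World A) : LForm A → Bool
  | .atom a => w a
  | .eimp α β => !α.truth w || β.truth w
  | .econj α β => α.truth w && β.truth w
  | .edisj α β => α.truth w || β.truth w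
  | .eneg α => !α.truth w

/-- Assertibility and deniability conditions, as a pair (⊩⁺, ⊩⁻). -/
def SForm.sem : SForm A → Context A → Prop × Prop
  | .base α, C => (∀ w ∈ C, α.truth w = true, ∀ w ∈ C, α.truth w = false)
  | .ineg φ, C => ((φ.sem C).2, (φ.sem C).1)
  | .idisj φ ψ, C => ((φ.sem C).1 ∨ (ψ.sem C).1, (φ.sem C).2 ∧ (ψ.sem C).2)
  | .iconj φ ψ, C => ((φ.sem C).1 ∧ (ψ.sem C).1, (φ.sem C).2 ∨ (ψ.sem C).2)
  | .iimp φ ψ, C =>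
      (∀ D : Context A, D.Nonempty → D ⊆ C → (φ.sem D).1 → (ψ.sem D).1,
       ∃ D : Context A, D.Nonempty ∧ D ⊆ C ∧ (φ.sem D).1 ∧ (ψ.sem D).2)

/-- C ⊩⁺ φ : assertibility. -/
def Assert (C : Context A) (φ : SForm A) : Prop := (φ.sem C).1

/-- C ⊩⁻ φ : deniability. -/
def Deny (C : Context A) (φ : SForm A) : Prop := (φ.sem C).2

/-- Δ ⊨ ψ : assertibility-preserving consequence. -/
def Entails (Δ : Set (SForm A)) (ψ : SForm A) : Prop :=
  ∀ C : Context A, C.Nonempty → (∀ δ ∈ Δ, Assert C δ) → Assert C ψ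

lemma key (φ : SForm A) : ∀ C : Context A, C.Nonempty →
    ¬ ((φ.sem C).1 ∧ (φ.sem C).2) := by
  induction φ with
  | base α =>
    rintro C ⟨w, hw⟩ ⟨h1, h2⟩
    have := h1 w hw; have := h2 w hw; simp_all
  | iimp φ ψ ihφ ihψ =>
    rintro C hC ⟨h1, ⟨D, hD, hDC, hφ, hψ⟩⟩
    exact ihψ D hD ⟨h1 D hD hDC hφ, hψ⟩
  | iconj φ ψ ihφ ihψ =>
    rintro C hC ⟨⟨a, b⟩, h2⟩
    rcases h2 with h | h
    · exact ihφ C hC ⟨a, h⟩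
    · exact ihψ C hC ⟨b, h⟩
  | idisj φ ψ ihφ ihψ =>
    rintro C hC ⟨h1, ⟨a, b⟩⟩
    rcases h1 with h | h
    · exact ihφ C hC ⟨h, a⟩
    · exact ihψ C hC ⟨h, b⟩
  | ineg φ ih =>
    rintro C hC ⟨h1, h2⟩
    exact ih C hC ⟨h2, h1⟩

theorem not_assert_and_deny (C : Context A) (hC : C.Nonempty) (φ : SForm A) :
    ¬ (Assert C φ ∧ Deny C φ) := key φ C hC

end LAD
end

section
/- Restricted to formulas of the language L, the consequence relation ⊨ coincides with classical consequence: for any set Δ of L-formulas and any L-formula α, Δ ⊨ α if and only if every possible world at which all formulas of Δ are true (classically) is a world at which α is true (classically). -/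
namespace LAD

variable {A : Type}

theorem L_entailment_is_classical (Δ : Set (LForm A)) (α : LForm A) :
    Entails (SForm.base '' Δ) (.base α) ↔
      ∀ w : World A, (∀ δ ∈ Δ, δ.truth w = true) → α.truth w = true := by
  constructor
  · intro h w hw
    have := h {w} ⟨w, rfl⟩ ?_ w rfl
    · exact this
    · rintro _ ⟨δ, hδ, rfl⟩
      intro v hv
      cases hv
      exact hw δ hδ
  · intro h C _ hC w hwC
    exact h w fun δ hδ => hC (.base δ) ⟨δ, hδ, rfl⟩ w hwC

end LAD
end

section
/- Every safe L*-formula is persistent: if φ is safe, C ⊩⁺ φ, and D is a nonempty subset of C, then D ⊩⁺ φ. -/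
namespace LAD

variable {A : Type}

/-- Whether an L*-formula contains an occurrence of intensional implication. -/
def SForm.hasImp : SForm A → Bool
  | .base _ => false
  | .iimp _ _ => true
  | .iconj φ ψ => φ.hasImp || ψ.hasImp
  | .idisj φ ψ => φ.hasImp || ψ.hasImp
  | .ineg φ => φ.hasImp

/-- Whether an L*-formula contains no intensional implication in the scope of
an intensional negation. -/
def SForm.noImpUnderNeg : SForm A → Bool
  | .base _ => true
  | .iimp φ ψ => φ.noImpUnderNeg && ψ.noImpUnderNeg
  | .iconj φ ψ => φ.noImpUnderNeg && ψ.noImpUnderNeg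
  | .idisj φ ψ => φ.noImpUnderNeg && ψ.noImpUnderNeg
  | .ineg φ => !φ.hasImp

/-- A formula is safe if it contains no → in the scope of ¬, or is an implication. -/
def Safe (φ : SForm A) : Prop :=
  φ.noImpUnderNeg = true ∨ ∃ ψ χ, φ = SForm.iimp ψ χ

/-- The safe formulas of a set of premises. -/
def safePart (Δ : Set (SForm A)) : Set (SForm A) := {δ ∈ Δ | Safe δ}

lemma noimp_persist (φ : SForm A) (h : φ.hasImp = false)
    (C D : Context A) (hDC : D ⊆ C) :
    ((φ.sem C).1 → (φ.sem D).1) ∧ ((φ.sem C).2 → (φ.sem D).2) := by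
  induction φ with
  | base α =>
      exact ⟨fun h1 w hw => h1 w (hDC hw), fun h1 w hw => h1 w (hDC hw)⟩
  | iimp φ ψ ih1 ih2 => simp [SForm.hasImp] at h
  | iconj φ ψ ih1 ih2 =>
      simp [SForm.hasImp] at h
      obtain ⟨p1, p2⟩ := ih1 h.1
      obtain ⟨q1, q2⟩ := ih2 h.2
      exact ⟨fun ⟨a, b⟩ => ⟨p1 a, q1 b⟩, fun hc => hc.elim (fun a => Or.inl (p2 a)) (fun b => Or.inr (q2 b))⟩
  | idisj φ ψ ih1 ih2 =>
      simp [SForm.hasImp] at h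
      obtain ⟨p1, p2⟩ := ih1 h.1
      obtain ⟨q1, q2⟩ := ih2 h.2
      exact ⟨fun hc => hc.elim (fun a => Or.inl (p1 a)) (fun b => Or.inr (q1 b)), fun ⟨a, b⟩ => ⟨p2 a, q2 b⟩⟩
  | ineg φ ih =>
      simp [SForm.hasImp] at h
      obtain ⟨p1, p2⟩ := ih h
      exact ⟨p2, p1⟩

lemma noImpUnderNeg_persist (φ : SForm A) (h : φ.noImpUnderNeg = true)
    (C D : Context A) (hDC : D ⊆ C) : (φ.sem C).1 → (φ.sem D).1 := by
  induction φ with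
  | base α => exact fun h1 w hw => h1 w (hDC hw)
  | iimp φ ψ ih1 ih2 =>
      exact fun h1 E hE hEC => h1 E hE (hEC.trans hDC)
  | iconj φ ψ ih1 ih2 =>
      simp [SForm.noImpUnderNeg] at h
      exact fun ⟨a, b⟩ => ⟨ih1 h.1 a, ih2 h.2 b⟩
  | idisj φ ψ ih1 ih2 =>
      simp [SForm.noImpUnderNeg] at h
      exact fun hc => hc.elim (fun a => Or.inl (ih1 h.1 a)) (fun b => Or.inr (ih2 h.2 b))
  | ineg φ ih =>
      simp [SForm.noImpUnderNeg] at h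
      exact (noimp_persist φ h C D hDC).2

theorem safe_persistent (φ : SForm A) (hφ : Safe φ)
    (C D : Context A) (hC : Assert C φ) (hD : D.Nonempty) (hDC : D ⊆ C) :
    Assert D φ := by
  rcases hφ with h | ⟨ψ, χ, rfl⟩
  · exact noImpUnderNeg_persist φ h C D hDC hC
  · exact fun E hE hEC => hC E hE (hEC.trans hDC)

end LAD
end

section
/- Let A be a finite set of atomic formulas. For any A-contexts C and D: C ⊩⁺ μ_D if and only if D = C. -/
namespace LAD

variable {A : Type}

/-- ⊥ := p ∩ ∼p for a fixed atom p. -/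
def botF (p : A) : SForm A := .base (.econj (.atom p) (.eneg (.atom p)))

/-- ◇φ := ¬(φ → ⊥). -/
def dia (p : A) (φ : SForm A) : SForm A := .ineg (.iimp φ (botF p))

/-- Iterated extensional conjunction of a list (true if empty). -/
def bigEConj (p : A) : List (LForm A) → LForm A
  | [] => .eimp (.atom p) (.atom p)
  | h :: t => t.foldl LForm.econj h

/-- Iterated extensional disjunction of a list (false if empty). -/
def bigEDisj (p : A) : List (LForm A) → LForm A
  | [] => .econj (.atom p) (.eneg (.atom p))
  | h :: t => t.foldl LForm.edisj h

/-- Iterated intensional conjunction of a list (true if empty). -/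
def bigIConj (p : A) : List (SForm A) → SForm A
  | [] => .base (.eimp (.atom p) (.atom p))
  | h :: t => t.foldl SForm.iconj h

/-- Iterated intensional disjunction of a list (⊥ if empty). -/
def bigIDisj (p : A) : List (SForm A) → SForm A
  | [] => botF p
  | h :: t => t.foldl SForm.idisj h

/-- α₁ ⊕ … ⊕ αₙ := (α₁ ∪ … ∪ αₙ) ∧ (◇α₁ ∧ … ∧ ◇αₙ). -/
def oplus (p : A) (l : List (LForm A)) : SForm A :=
  .iconj (.base (bigEDisj p l)) (bigIConj p (l.map fun α => dia p (.base α)))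

/-- σ_w : the canonical description of a world w (A finite). -/
noncomputable def sigmaW [Fintype A] [DecidableEq A] (p : A) (w : World A) : LForm A :=
  bigEConj p ((Finset.univ : Finset A).toList.map
    (fun a => if w a then LForm.atom a else .eneg (.atom a)))

/-- μ_C := σ_{w₁} ⊕ … ⊕ σ_{wₙ} for a finite context C = {w₁,…,wₙ}. -/
noncomputable def mu [Fintype A] [DecidableEq A] (p : A) (C : Finset (World A)) : SForm A :=
  oplus p (C.toList.map (sigmaW p))

/-- ξ_X := μ_{C₁} ∨ … ∨ μ_{C_k} for a finite set X = {C₁,…,C_k} of contexts. -/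
noncomputable def xi [Fintype A] [DecidableEq A] (p : A) (X : Finset (Finset (World A))) : SForm A :=
  bigIDisj p (X.toList.map (mu p))

lemma foldl_econj_truth (v : World A) (l : List (LForm A)) (h : LForm A) :
    (l.foldl LForm.econj h).truth v = (h.truth v && l.all (·.truth v)) := by
  induction l generalizing h with
  | nil => simp
  | cons x t ih => simp [List.foldl, ih, LForm.truth, Bool.and_assoc]

lemma foldl_edisj_truth (v : World A) (l : List (LForm A)) (h : LForm A) :
    (l.foldl LForm.edisj h).truth v = (h.truth v || l.any (·.truth v)) := by
  induction l generalizing h with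
  | nil => simp
  | cons x t ih => simp [List.foldl, ih, LForm.truth, Bool.or_assoc]

lemma bigEConj_truth (p : A) (v : World A) (l : List (LForm A)) :
    (bigEConj p l).truth v = l.all (·.truth v) := by
  cases l with
  | nil => simp [bigEConj, LForm.truth]
  | cons h t => simp [bigEConj, foldl_econj_truth, LForm.truth]

lemma bigEDisj_truth (p : A) (v : World A) (l : List (LForm A)) :
    (bigEDisj p l).truth v = l.any (·.truth v) := by
  cases l with
  | nil => simp [bigEDisj, LForm.truth]
  | cons h t => simp [bigEDisj, foldl_edisj_truth, LForm.truth]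

lemma sigmaW_truth [Fintype A] [DecidableEq A] (p : A) (w v : World A) :
    (sigmaW p w).truth v = true ↔ v = w := by
  simp only [sigmaW, bigEConj_truth, List.all_eq_true]
  constructor
  · intro h
    funext a
    have := h _ (List.mem_map_of_mem (by simp : a ∈ Finset.univ.toList))
    by_cases hw : w a <;> simp [hw, LForm.truth] at this <;> simp [this, hw]
  · rintro rfl x hx
    simp only [List.mem_map] at hx
    obtain ⟨a, -, rfl⟩ := hx
    by_cases hw : v a <;> simp [hw, LForm.truth]

lemma assert_foldl_iconj (C : Context A) (l : List (SForm A)) (h : SForm A) :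
    Assert C (l.foldl SForm.iconj h) ↔ (Assert C h ∧ ∀ φ ∈ l, Assert C φ) := by
  induction l generalizing h with
  | nil => simp
  | cons x t ih =>
    have hx : Assert C (h.iconj x) ↔ Assert C h ∧ Assert C x := Iff.rfl
    simp only [List.foldl, ih, hx, List.mem_cons]
    constructor
    · rintro ⟨⟨h1, h2⟩, h3⟩
      exact ⟨h1, fun φ hφ => hφ.elim (fun e => e ▸ h2) (h3 φ)⟩
    · rintro ⟨h1, h2⟩
      exact ⟨⟨h1, h2 x (Or.inl rfl)⟩, fun φ hφ => h2 φ (Or.inr hφ)⟩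

lemma assert_bigIConj (p : A) (C : Context A) (l : List (SForm A)) :
    Assert C (bigIConj p l) ↔ ∀ φ ∈ l, Assert C φ := by
  cases l with
  | nil => simp [bigIConj, Assert, SForm.sem, LForm.truth]
  | cons h t =>
    simp only [bigIConj, assert_foldl_iconj, List.mem_cons]
    constructor
    · rintro ⟨h1, h2⟩ φ hφ
      exact hφ.elim (fun e => e ▸ h1) (h2 φ)
    · intro h1
      exact ⟨h1 h (Or.inl rfl), fun φ hφ => h1 φ (Or.inr hφ)⟩

lemma assert_dia_sigma [Fintype A] [DecidableEq A] (p : A) (C : Finset (World A))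
    (w : World A) :
    Assert (↑C) (dia p (.base (sigmaW p w))) ↔ w ∈ C := by
  simp only [Assert, dia, SForm.sem, botF]
  constructor
  · rintro ⟨E, ⟨v, hv⟩, hEC, hE, -⟩
    have hvw : v = w := (sigmaW_truth p w v).mp (hE v hv)
    simpa using hEC (hvw ▸ hv)
  · intro hw
    refine ⟨{w}, ⟨w, rfl⟩, ?_, ?_, ?_⟩
    · intro v hv
      rw [Set.mem_singleton_iff] at hv
      simpa [hv] using hw
    · intro v hv
      rw [Set.mem_singleton_iff] at hv
      exact (sigmaW_truth p w v).mpr hv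
    · intro v _
      simp [LForm.truth]

theorem assert_mu_iff_eq [Fintype A] [DecidableEq A] (p : A)
    (C D : Finset (World A)) (hC : C.Nonempty) (hD : D.Nonempty) :
    Assert (↑C) (mu p D) ↔ D = C := by
  have hsplit : Assert (↑C) (mu p D) ↔
      Assert (↑C) (.base (bigEDisj p (D.toList.map (sigmaW p)))) ∧
      Assert (↑C) (bigIConj p ((D.toList.map (sigmaW p)).map fun α => dia p (.base α))) :=
    Iff.rfl
  rw [hsplit]
  constructor
  · rintro ⟨h1, h2⟩
    apply Finset.Subset.antisymm
    · -- D ⊆ C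
      intro w hw
      have hmem : dia p (.base (sigmaW p w)) ∈
          (D.toList.map (sigmaW p)).map fun α => dia p (.base α) :=
        List.mem_map_of_mem (List.mem_map_of_mem (Finset.mem_toList.mpr hw))
      exact (assert_dia_sigma p C w).mp
        ((assert_bigIConj p (↑C) _).mp h2 _ hmem)
    · -- C ⊆ D
      intro v hv
      have h1' : (bigEDisj p (D.toList.map (sigmaW p))).truth v = true := h1 v (by simpa using hv)
      rw [bigEDisj_truth] at h1'
      simp only [List.any_eq_true, List.mem_map] at h1'
      obtain ⟨x, ⟨w, hw, rfl⟩, hwt⟩ := h1'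
      have := (sigmaW_truth p w v).mp hwt
      rw [this]
      simpa using hw
  · rintro rfl
    constructor
    · intro v hv
      rw [bigEDisj_truth]
      simp only [List.any_eq_true, List.mem_map]
      exact ⟨sigmaW p v, ⟨v, Finset.mem_toList.mpr (by simpa using hv), rfl⟩,
        (sigmaW_truth p v v).mpr rfl⟩
    · rw [assert_bigIConj]
      intro φ hφ
      simp only [List.map_map, List.mem_map, Function.comp] at hφ
      obtain ⟨w, hw, rfl⟩ := hφ
      exact (assert_dia_sigma p _ w).mpr (Finset.mem_toList.mp hw)

end LAD
end

section
/- Let Δ be a set of L*-formulas and let Δˢ be the set of safe formulas in Δ. For L-formulas α, β, γ: if Δˢ ∪ {α} ⊨ γ and Δˢ ∪ {β} ⊨ γ, then Δ ∪ {α ∪ β} ⊨ γ (where α ∪ β denotes extensional disjunction). -/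
namespace LAD

variable {A : Type}

lemma mono_impFree (φ : SForm A) (hφ : φ.hasImp = false) :
    ∀ C D : Context A, D ⊆ C →
      ((φ.sem C).1 → (φ.sem D).1) ∧ ((φ.sem C).2 → (φ.sem D).2) := by
  induction φ with
  | base α =>
    intro C D hDC
    exact ⟨fun h w hw => h w (hDC hw), fun h w hw => h w (hDC hw)⟩
  | iimp φ ψ ihφ ihψ => simp [SForm.hasImp] at hφ
  | iconj φ ψ ihφ ihψ =>
    simp [SForm.hasImp] at hφ
    intro C D hDC
    obtain ⟨h1, h2⟩ := ihφ hφ.1 C D hDC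
    obtain ⟨h3, h4⟩ := ihψ hφ.2 C D hDC
    exact ⟨fun h => ⟨h1 h.1, h3 h.2⟩, fun h => h.elim (fun h => .inl (h2 h)) (fun h => .inr (h4 h))⟩
  | idisj φ ψ ihφ ihψ =>
    simp [SForm.hasImp] at hφ
    intro C D hDC
    obtain ⟨h1, h2⟩ := ihφ hφ.1 C D hDC
    obtain ⟨h3, h4⟩ := ihψ hφ.2 C D hDC
    exact ⟨fun h => h.elim (fun h => .inl (h1 h)) (fun h => .inr (h3 h)), fun h => ⟨h2 h.1, h4 h.2⟩⟩
  | ineg φ ihφ =>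
    simp [SForm.hasImp] at hφ
    intro C D hDC
    obtain ⟨h1, h2⟩ := ihφ hφ C D hDC
    exact ⟨h2, h1⟩

lemma mono_safe (φ : SForm A) (hφ : Safe φ) :
    ∀ C D : Context A, D ⊆ C → Assert C φ → Assert D φ := by
  rcases hφ with hφ | ⟨ψ, χ, rfl⟩
  · induction φ with
    | base α => exact fun C D hDC h w hw => h w (hDC hw)
    | iimp φ ψ ihφ ihψ =>
      intro C D hDC h E hE hEC
      exact h E hE (hEC.trans hDC)
    | iconj φ ψ ihφ ihψ =>
      simp [SForm.noImpUnderNeg] at hφ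
      intro C D hDC h
      exact ⟨ihφ hφ.1 C D hDC h.1, ihψ hφ.2 C D hDC h.2⟩
    | idisj φ ψ ihφ ihψ =>
      simp [SForm.noImpUnderNeg] at hφ
      intro C D hDC h
      exact h.elim (fun h => .inl (ihφ hφ.1 C D hDC h)) (fun h => .inr (ihψ hφ.2 C D hDC h))
    | ineg φ ihφ =>
      simp [SForm.noImpUnderNeg] at hφ
      exact fun C D hDC h => (mono_impFree φ hφ C D hDC).2 h
  · intro C D hDC h E hE hEC
    exact h E hE (hEC.trans hDC)

theorem extensional_disjunction_elim_sound (Δ : Set (SForm A)) (α β γ : LForm A)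
    (h1 : Entails (safePart Δ ∪ {.base α}) (.base γ))
    (h2 : Entails (safePart Δ ∪ {.base β}) (.base γ)) :
    Entails (Δ ∪ {.base (.edisj α β)}) (.base γ) := by
  intro C hC hΔ
  have hdisj : ∀ w ∈ C, (LForm.edisj α β).truth w = true :=
    hΔ _ (Or.inr rfl)
  intro w hw
  have := hdisj w hw
  simp [LForm.truth] at this
  have key : ∀ δ : LForm A, (δ.truth w = true) →
      Entails (safePart Δ ∪ {.base δ}) (.base γ) → γ.truth w = true := by
    intro δ hδ hent
    set D : Context A := {v ∈ C | δ.truth v = true} with hD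
    have hDC : D ⊆ C := fun v hv => hv.1
    have hDne : D.Nonempty := ⟨w, hw, hδ⟩
    have := hent D hDne ?_ w ⟨hw, hδ⟩
    · exact this
    · intro φ hφ
      rcases hφ with hφ | hφ
      · exact mono_safe φ hφ.2 C D hDC (hΔ φ (Or.inl hφ.1))
      · simp only [Set.mem_singleton_iff] at hφ
        subst hφ
        exact fun v hv => hv.2
  rcases this with h | h
  · exact key α h h1
  · exact key β h h2

end LAD
end

section
/- The argument with premises p ∪ q, p → (r → t), q → (s → t) and conclusion (r → t) ∨ (s → t) is not semantically valid: there exists a context C such that C ⊩⁺ p ∪ q, C ⊩⁺ p → (r → t), and C ⊩⁺ q → (s → t), but C ⊮⁺ (r → t) ∨ (s → t). (A witness is the context over atoms {p,q,r,s,t} consisting of the four worlds w₁: p,r,t true, q,s false; w₂: p,s true, q,r,t false; w₃: q,s,t true, p,r false; w₄: q,r true, p,s,t false.) -/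
namespace LAD

variable {A : Type}

/-- Auxiliary: the world making exactly the atoms in `S` true. -/
noncomputable def mkW (S : Set A) : World A :=
  fun a => @ite _ (a ∈ S) (Classical.propDecidable _) true false

lemma mkW_pos {S : Set A} {a : A} (h : a ∈ S) : mkW S a = true := if_pos h

lemma mkW_neg {S : Set A} {a : A} (h : a ∉ S) : mkW S a = false := if_neg h

theorem murder_argument_invalid (p q r s t : A)
    (hpq : p ≠ q) (hpr : p ≠ r) (hps : p ≠ s) (hpt : p ≠ t)
    (hqr : q ≠ r) (hqs : q ≠ s) (hqt : q ≠ t)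
    (hrs : r ≠ s) (hrt : r ≠ t) (hst : s ≠ t) :
    ∃ C : Context A, C.Nonempty ∧
      Assert C (.base (.edisj (.atom p) (.atom q))) ∧
      Assert C (.iimp (.base (.atom p)) (.iimp (.base (.atom r)) (.base (.atom t)))) ∧
      Assert C (.iimp (.base (.atom q)) (.iimp (.base (.atom s)) (.base (.atom t)))) ∧
      ¬ Assert C (.idisj (.iimp (.base (.atom r)) (.base (.atom t)))
                         (.iimp (.base (.atom s)) (.base (.atom t)))) := by
  classical
  set W1 : World A := mkW ({p, r, t} : Set A) with hW1
  set W2 : World A := mkW ({p, s} : Set A) with hW2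
  set W3 : World A := mkW ({q, s, t} : Set A) with hW3
  set W4 : World A := mkW ({q, r} : Set A) with hW4
  have h1p : W1 p = true := mkW_pos (by simp)
  have h1q : W1 q = false := mkW_neg (by simp [Ne.symm hpq, hqr, hqt])
  have h1r : W1 r = true := mkW_pos (by simp)
  have h1t : W1 t = true := mkW_pos (by simp)
  have h2p : W2 p = true := mkW_pos (by simp)
  have h2q : W2 q = false := mkW_neg (by simp [Ne.symm hpq, hqs])
  have h2r : W2 r = false := mkW_neg (by simp [Ne.symm hpr, hrs])
  have h2s : W2 s = true := mkW_pos (by simp)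
  have h2t : W2 t = false := mkW_neg (by simp [Ne.symm hpt, Ne.symm hst])
  have h3p : W3 p = false := mkW_neg (by simp [hpq, hps, hpt])
  have h3q : W3 q = true := mkW_pos (by simp)
  have h3r : W3 r = false := mkW_neg (by simp [Ne.symm hqr, hrs, hrt])
  have h3s : W3 s = true := mkW_pos (by simp)
  have h3t : W3 t = true := mkW_pos (by simp)
  have h4p : W4 p = false := mkW_neg (by simp [hpq, hpr])
  have h4q : W4 q = true := mkW_pos (by simp)
  have h4r : W4 r = true := mkW_pos (by simp)
  have h4s : W4 s = false := mkW_neg (by simp [Ne.symm hqs, Ne.symm hrs])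
  have h4t : W4 t = false := mkW_neg (by simp [Ne.symm hqt, Ne.symm hrt])
  refine ⟨{W1, W2, W3, W4}, ⟨W1, by simp⟩, ?_, ?_, ?_, ?_⟩
  · -- p ∪ q assertible
    simp only [Assert, SForm.sem, LForm.truth]
    rintro w hw
    simp only [Set.mem_insert_iff, Set.mem_singleton_iff] at hw
    rcases hw with rfl | rfl | rfl | rfl <;> simp [h1p, h2p, h3q, h4q]
  · -- p → (r → t)
    simp only [Assert, SForm.sem, LForm.truth]
    intro D hDne hDC hDp E hEne hED hEr w hwE
    have hwD := hED hwE
    have hwC := hDC hwD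
    simp only [Set.mem_insert_iff, Set.mem_singleton_iff] at hwC
    rcases hwC with rfl | rfl | rfl | rfl
    · exact h1t
    · have := hEr _ hwE; rw [h2r] at this; exact absurd this (by simp)
    · have := hDp _ hwD; rw [h3p] at this; exact absurd this (by simp)
    · have := hDp _ hwD; rw [h4p] at this; exact absurd this (by simp)
  · -- q → (s → t)
    simp only [Assert, SForm.sem, LForm.truth]
    intro D hDne hDC hDq E hEne hED hEs w hwE
    have hwD := hED hwE
    have hwC := hDC hwD
    simp only [Set.mem_insert_iff, Set.mem_singleton_iff] at hwC
    rcases hwC with rfl | rfl | rfl | rfl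
    · have := hDq _ hwD; rw [h1q] at this; exact absurd this (by simp)
    · have := hDq _ hwD; rw [h2q] at this; exact absurd this (by simp)
    · exact h3t
    · have := hEs _ hwE; rw [h4s] at this; exact absurd this (by simp)
  · -- conclusion fails
    simp only [Assert, SForm.sem, LForm.truth]
    rintro (h | h)
    · have := h {W1, W4} ⟨W1, by simp⟩
        (by rintro w hw; simp only [Set.mem_insert_iff, Set.mem_singleton_iff] at hw ⊢; tauto)
        (by rintro w hw; simp only [Set.mem_insert_iff, Set.mem_singleton_iff] at hw
            rcases hw with rfl | rfl
            · exact h1r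
            · exact h4r)
        W4 (by simp)
      rw [h4t] at this; exact absurd this (by simp)
    · have := h {W2, W3} ⟨W2, by simp⟩
        (by rintro w hw; simp only [Set.mem_insert_iff, Set.mem_singleton_iff] at hw ⊢; tauto)
        (by rintro w hw; simp only [Set.mem_insert_iff, Set.mem_singleton_iff] at hw
            rcases hw with rfl | rfl
            · exact h2s
            · exact h3s)
        W2 (by simp)
      rw [h2t] at this; exact absurd this (by simp)


end LAD
end

section
/- The formula ¬(p → q) is not persistent: there exist a context C and a nonempty subset E ⊆ C such that C ⊩⁺ ¬(p → q) but E ⊮⁺ ¬(p → q). (A witness: C consisting of worlds w₁ with p true, q false; w₂ with p,q true; w₃ with p false, q true; w₄ with p,q false; and E = {w₃, w₄}.) -/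
namespace LAD

variable {A : Type}

theorem neg_imp_not_persistent (p q : A) (hpq : p ≠ q) :
    ∃ C E : Context A, E.Nonempty ∧ E ⊆ C ∧
      Assert C (.ineg (.iimp (.base (.atom p)) (.base (.atom q)))) ∧
      ¬ Assert E (.ineg (.iimp (.base (.atom p)) (.base (.atom q)))) := by
  classical
  let w1 : World A := fun a => decide (a = p)
  let w3 : World A := fun _ => false
  refine ⟨{w1, w3}, {w3}, ⟨w3, rfl⟩, by intro x hx; simp_all, ?_, ?_⟩
  · -- Assert C ¬(p→q) = Deny C (p→q)
    refine ⟨{w1}, ⟨w1, rfl⟩, by intro x hx; left; exact hx, ?_, ?_⟩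
    · intro w hw; simp at hw; subst hw; simp [LForm.truth, w1]
    · intro w hw; simp at hw; subst hw
      simp [LForm.truth, w1]; exact fun h => hpq h.symm
  · intro h
    obtain ⟨D, ⟨d, hd⟩, hDE, hp, _⟩ := h
    have := hp d hd
    have hdw : d = w3 := hDE hd
    subst hdw
    simp [LForm.truth, w3] at this

end LAD
end

section
/- Every consistent finite set Δ of L*-formulas has a model: if Δ ⊬ ⊥, then there is a context C with C ⊩⁺ ψ for every ψ ∈ Δ. -/
namespace LAD

variable {A : Type}

/-- The Fitch-style natural deduction system. Round-bracket (restricted)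
subproofs keep only the safe formulas of the ambient premises. -/
inductive Deriv (p : A) : Set (SForm A) → SForm A → Prop where
  | hyp {Δ φ} : φ ∈ Δ → Deriv p Δ φ
  -- extensional rules
  | iEConj {Δ α β} : Deriv p Δ (.base α) → Deriv p Δ (.base β) →
      Deriv p Δ (.base (.econj α β))
  | eEConj₁ {Δ α β} : Deriv p Δ (.base (.econj α β)) → Deriv p Δ (.base α)
  | eEConj₂ {Δ α β} : Deriv p Δ (.base (.econj α β)) → Deriv p Δ (.base β)
  | iEDisj₁ {Δ α β} : Deriv p Δ (.base α) → Deriv p Δ (.base (.edisj α β))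
  | iEDisj₂ {Δ α β} : Deriv p Δ (.base β) → Deriv p Δ (.base (.edisj α β))
  | eEDisj {Δ α β γ} : Deriv p Δ (.base (.edisj α β)) →
      Deriv p (insert (.base α) (safePart Δ)) (.base γ) →
      Deriv p (insert (.base β) (safePart Δ)) (.base γ) →
      Deriv p Δ (.base γ)
  | iEImp {Δ α β} : Deriv p (insert (.base α) (safePart Δ)) (.base β) →
      Deriv p Δ (.base (.eimp α β))
  | eEImp {Δ α β} : Deriv p Δ (.base α) → Deriv p Δ (.base (.eimp α β)) →
      Deriv p Δ (.base β)
  | iENeg {Δ α} : Deriv p (insert (.base α) (safePart Δ)) (botF p) →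
      Deriv p Δ (.base (.eneg α))
  | eENeg₁ {Δ α} : Deriv p Δ (.base α) → Deriv p Δ (.base (.eneg α)) →
      Deriv p Δ (botF p)
  | eENeg₂ {Δ α} : Deriv p Δ (.base (.eneg (.eneg α))) → Deriv p Δ (.base α)
  -- intensional rules
  | iIConj {Δ φ ψ} : Deriv p Δ φ → Deriv p Δ ψ → Deriv p Δ (.iconj φ ψ)
  | eIConj₁ {Δ φ ψ} : Deriv p Δ (.iconj φ ψ) → Deriv p Δ φ
  | eIConj₂ {Δ φ ψ} : Deriv p Δ (.iconj φ ψ) → Deriv p Δ ψ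
  | iIDisj₁ {Δ φ ψ} : Deriv p Δ φ → Deriv p Δ (.idisj φ ψ)
  | iIDisj₂ {Δ φ ψ} : Deriv p Δ ψ → Deriv p Δ (.idisj φ ψ)
  | eIDisj {Δ φ ψ χ} : Deriv p Δ (.idisj φ ψ) →
      Deriv p (insert φ Δ) χ → Deriv p (insert ψ Δ) χ → Deriv p Δ χ
  | iIImp {Δ φ ψ} : Deriv p (insert φ (safePart Δ)) ψ → Deriv p Δ (.iimp φ ψ)
  | eIImp {Δ φ ψ} : Deriv p Δ φ → Deriv p Δ (.iimp φ ψ) → Deriv p Δ ψ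
  | iINeg {Δ} {α : LForm A} : Deriv p (insert (.base α) (safePart Δ)) (botF p) →
      Deriv p Δ (.ineg (.base α))
  | eINeg {Δ φ} : Deriv p Δ φ → Deriv p Δ (.ineg φ) → Deriv p Δ (botF p)
  | efq {Δ φ} : Deriv p Δ (botF p) → Deriv p Δ φ
  -- interaction rules
  | negNeg₁ {Δ φ} : Deriv p Δ (.ineg (.ineg φ)) → Deriv p Δ φ
  | negNeg₂ {Δ φ} : Deriv p Δ φ → Deriv p Δ (.ineg (.ineg φ))
  | negConj₁ {Δ φ ψ} : Deriv p Δ (.ineg (.iconj φ ψ)) →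
      Deriv p Δ (.idisj (.ineg φ) (.ineg ψ))
  | negConj₂ {Δ φ ψ} : Deriv p Δ (.idisj (.ineg φ) (.ineg ψ)) →
      Deriv p Δ (.ineg (.iconj φ ψ))
  | negDisj₁ {Δ φ ψ} : Deriv p Δ (.ineg (.idisj φ ψ)) →
      Deriv p Δ (.iconj (.ineg φ) (.ineg ψ))
  | negDisj₂ {Δ φ ψ} : Deriv p Δ (.iconj (.ineg φ) (.ineg ψ)) →
      Deriv p Δ (.ineg (.idisj φ ψ))
  | negImp₁ {Δ φ ψ} : Deriv p Δ (.ineg (.iimp φ ψ)) →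
      Deriv p Δ (dia p (.iconj φ (.ineg ψ)))
  | negImp₂ {Δ φ ψ} : Deriv p Δ (dia p (.iconj φ (.ineg ψ))) →
      Deriv p Δ (.ineg (.iimp φ ψ))
  | cem {Δ φ} : Deriv p Δ (.idisj (.iimp φ (botF p)) (dia p φ))
  | diaOplus {Δ} {l : List (LForm A)} : l ≠ [] →
      Deriv p Δ (bigIConj p (l.map fun α => dia p (.base α))) →
      Deriv p Δ (dia p (oplus p l))

-- ===================== Auxiliary development =====================
section Aux

variable {p : A}

theorem safe_base (α : LForm A) : Safe (SForm.base α : SForm A) := Or.inl rfl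

theorem safe_iimp (φ ψ : SForm A) : Safe (SForm.iimp φ ψ) := Or.inr ⟨φ, ψ, rfl⟩

theorem safePart_mono {Γ Γ' : Set (SForm A)} (h : Γ ⊆ Γ') : safePart Γ ⊆ safePart Γ' :=
  fun _ hx => ⟨h hx.1, hx.2⟩

theorem mem_safePart {Γ : Set (SForm A)} {φ : SForm A} (h : φ ∈ Γ) (hs : Safe φ) :
    φ ∈ safePart Γ := ⟨h, hs⟩

theorem Deriv.weaken {Γ Γ' : Set (SForm A)} {φ : SForm A}
    (h : Deriv p Γ φ) (sub : Γ ⊆ Γ') : Deriv p Γ' φ := by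
  induction h generalizing Γ' with
  | hyp h => exact .hyp (sub h)
  | iEConj _ _ ih₁ ih₂ => exact .iEConj (ih₁ sub) (ih₂ sub)
  | eEConj₁ _ ih => exact .eEConj₁ (ih sub)
  | eEConj₂ _ ih => exact .eEConj₂ (ih sub)
  | iEDisj₁ _ ih => exact .iEDisj₁ (ih sub)
  | iEDisj₂ _ ih => exact .iEDisj₂ (ih sub)
  | eEDisj _ _ _ ih ih₁ ih₂ =>
      exact .eEDisj (ih sub) (ih₁ (Set.insert_subset_insert (safePart_mono sub)))
        (ih₂ (Set.insert_subset_insert (safePart_mono sub)))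
  | iEImp _ ih => exact .iEImp (ih (Set.insert_subset_insert (safePart_mono sub)))
  | eEImp _ _ ih₁ ih₂ => exact .eEImp (ih₁ sub) (ih₂ sub)
  | iENeg _ ih => exact .iENeg (ih (Set.insert_subset_insert (safePart_mono sub)))
  | eENeg₁ _ _ ih₁ ih₂ => exact .eENeg₁ (ih₁ sub) (ih₂ sub)
  | eENeg₂ _ ih => exact .eENeg₂ (ih sub)
  | iIConj _ _ ih₁ ih₂ => exact .iIConj (ih₁ sub) (ih₂ sub)
  | eIConj₁ _ ih => exact .eIConj₁ (ih sub)
  | eIConj₂ _ ih => exact .eIConj₂ (ih sub)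
  | iIDisj₁ _ ih => exact .iIDisj₁ (ih sub)
  | iIDisj₂ _ ih => exact .iIDisj₂ (ih sub)
  | eIDisj _ _ _ ih ih₁ ih₂ =>
      exact .eIDisj (ih sub) (ih₁ (Set.insert_subset_insert sub))
        (ih₂ (Set.insert_subset_insert sub))
  | iIImp _ ih => exact .iIImp (ih (Set.insert_subset_insert (safePart_mono sub)))
  | eIImp _ _ ih₁ ih₂ => exact .eIImp (ih₁ sub) (ih₂ sub)
  | iINeg _ ih => exact .iINeg (ih (Set.insert_subset_insert (safePart_mono sub)))
  | eINeg _ _ ih₁ ih₂ => exact .eINeg (ih₁ sub) (ih₂ sub)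
  | efq _ ih => exact .efq (ih sub)
  | negNeg₁ _ ih => exact .negNeg₁ (ih sub)
  | negNeg₂ _ ih => exact .negNeg₂ (ih sub)
  | negConj₁ _ ih => exact .negConj₁ (ih sub)
  | negConj₂ _ ih => exact .negConj₂ (ih sub)
  | negDisj₁ _ ih => exact .negDisj₁ (ih sub)
  | negDisj₂ _ ih => exact .negDisj₂ (ih sub)
  | negImp₁ _ ih => exact .negImp₁ (ih sub)
  | negImp₂ _ ih => exact .negImp₂ (ih sub)
  | cem => exact .cem
  | diaOplus hne _ ih => exact .diaOplus hne (ih sub)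

/-- Cut, via disjunction elimination. -/
theorem Deriv.cut {Γ : Set (SForm A)} {φ χ : SForm A}
    (h : Deriv p Γ φ) (h₂ : Deriv p (insert φ Γ) χ) : Deriv p Γ χ :=
  .eIDisj (.iIDisj₁ h) h₂ h₂

/-- Theoremhood: derivable from every premise set. -/
def Thm (p : A) (φ : SForm A) : Prop := ∀ Γ : Set (SForm A), Deriv p Γ φ

theorem Thm.mp {φ ψ : SForm A} (h : Thm p (SForm.iimp φ ψ)) {Γ : Set (SForm A)}
    (hφ : Deriv p Γ φ) : Deriv p Γ ψ := .eIImp hφ (h Γ)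

theorem thm_imp_intro {φ ψ : SForm A}
    (h : ∀ Γ : Set (SForm A), φ ∈ Γ → Deriv p Γ ψ) : Thm p (SForm.iimp φ ψ) :=
  fun Γ => .iIImp (h _ (Set.mem_insert _ _))

theorem imp_trans {φ ψ χ : SForm A} (h₁ : Thm p (SForm.iimp φ ψ))
    (h₂ : Thm p (SForm.iimp ψ χ)) : Thm p (SForm.iimp φ χ) :=
  thm_imp_intro fun Γ hφ => .eIImp (.eIImp (.hyp hφ) (h₁ Γ)) (h₂ Γ)

end Aux
section Folds
variable {p : A}

-- ---- iconj folds ----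
private theorem foldl_iconj_acc {Γ : Set (SForm A)} :
    ∀ (t : List (SForm A)) (acc : SForm A),
      Deriv p Γ (t.foldl SForm.iconj acc) → Deriv p Γ acc
  | [], _, h => h
  | _ :: t, acc, h => .eIConj₁ (foldl_iconj_acc t _ h)

private theorem foldl_iconj_mem {Γ : Set (SForm A)} :
    ∀ (t : List (SForm A)) (acc x : SForm A), x ∈ t →
      Deriv p Γ (t.foldl SForm.iconj acc) → Deriv p Γ x
  | y :: t, acc, x, hx, h => by
      rcases List.mem_cons.1 hx with rfl | hx
      · exact .eIConj₂ (foldl_iconj_acc t _ h)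
      · exact foldl_iconj_mem t _ x hx h

private theorem foldl_iconj_intro {Γ : Set (SForm A)} :
    ∀ (t : List (SForm A)) (acc : SForm A), Deriv p Γ acc →
      (∀ x ∈ t, Deriv p Γ x) → Deriv p Γ (t.foldl SForm.iconj acc)
  | [], _, h, _ => h
  | y :: t, acc, h, hall =>
      foldl_iconj_intro t _ (.iIConj h (hall y (by simp)))
        (fun x hx => hall x (by simp [hx]))

theorem bigIConj_intro {Γ : Set (SForm A)} {l : List (SForm A)}
    (h : ∀ x ∈ l, Deriv p Γ x) : Deriv p Γ (bigIConj p l) := by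
  cases l with
  | nil =>
      exact .iEImp (.hyp (Set.mem_insert _ _))
  | cons y t =>
      exact foldl_iconj_intro t y (h y (by simp)) (fun x hx => h x (by simp [hx]))

theorem bigIConj_elim {Γ : Set (SForm A)} {l : List (SForm A)} {x : SForm A}
    (hx : x ∈ l) (h : Deriv p Γ (bigIConj p l)) : Deriv p Γ x := by
  cases l with
  | nil => cases hx
  | cons y t =>
      rcases List.mem_cons.1 hx with rfl | hx
      · exact foldl_iconj_acc t x h
      · exact foldl_iconj_mem t y x hx h

-- ---- idisj folds ----
private theorem foldl_idisj_acc {Γ : Set (SForm A)} :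
    ∀ (t : List (SForm A)) (acc : SForm A),
      Deriv p Γ acc → Deriv p Γ (t.foldl SForm.idisj acc)
  | [], _, h => h
  | _ :: t, acc, h => foldl_idisj_acc t _ (.iIDisj₁ h)

private theorem foldl_idisj_mem {Γ : Set (SForm A)} :
    ∀ (t : List (SForm A)) (acc x : SForm A), x ∈ t →
      Deriv p Γ x → Deriv p Γ (t.foldl SForm.idisj acc)
  | y :: t, acc, x, hx, h => by
      rcases List.mem_cons.1 hx with rfl | hx
      · exact foldl_idisj_acc t _ (.iIDisj₂ h)
      · exact foldl_idisj_mem t _ x hx h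

theorem bigIDisj_intro {Γ : Set (SForm A)} {l : List (SForm A)} {x : SForm A}
    (hx : x ∈ l) (h : Deriv p Γ x) : Deriv p Γ (bigIDisj p l) := by
  cases l with
  | nil => cases hx
  | cons y t =>
      rcases List.mem_cons.1 hx with rfl | hx
      · exact foldl_idisj_acc t x h
      · exact foldl_idisj_mem t y x hx h

private theorem foldl_idisj_elim {Γ : Set (SForm A)} {χ : SForm A} :
    ∀ (t : List (SForm A)) (acc : SForm A),
      Deriv p Γ (t.foldl SForm.idisj acc) →
      Deriv p (insert acc Γ) χ →
      (∀ x ∈ t, Deriv p (insert x Γ) χ) → Deriv p Γ χ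
  | [], acc, h, hacc, _ => h.cut hacc
  | y :: t, acc, h, hacc, hall =>
      foldl_idisj_elim t (SForm.idisj acc y) h
        (.eIDisj (.hyp (Set.mem_insert _ _))
          (hacc.weaken (Set.insert_subset_insert (Set.subset_insert _ _)))
          ((hall y (by simp)).weaken (Set.insert_subset_insert (Set.subset_insert _ _))))
        (fun x hx => hall x (by simp [hx]))

theorem bigIDisj_elim {Γ : Set (SForm A)} {l : List (SForm A)} {χ : SForm A}
    (h : Deriv p Γ (bigIDisj p l))
    (hall : ∀ x ∈ l, Deriv p (insert x Γ) χ) : Deriv p Γ χ := by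
  cases l with
  | nil => exact .efq h
  | cons y t =>
      exact foldl_idisj_elim t y h (hall y (by simp)) (fun x hx => hall x (by simp [hx]))

-- ---- edisj folds (on base formulas) ----
private theorem foldl_edisj_acc {Γ : Set (SForm A)} :
    ∀ (t : List (LForm A)) (acc : LForm A),
      Deriv p Γ (.base acc) → Deriv p Γ (.base (t.foldl LForm.edisj acc))
  | [], _, h => h
  | _ :: t, acc, h => foldl_edisj_acc t _ (.iEDisj₁ h)

private theorem foldl_edisj_mem {Γ : Set (SForm A)} :
    ∀ (t : List (LForm A)) (acc x : LForm A), x ∈ t →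
      Deriv p Γ (.base x) → Deriv p Γ (.base (t.foldl LForm.edisj acc))
  | y :: t, acc, x, hx, h => by
      rcases List.mem_cons.1 hx with rfl | hx
      · exact foldl_edisj_acc t _ (.iEDisj₂ h)
      · exact foldl_edisj_mem t _ x hx h

theorem bigEDisj_intro {Γ : Set (SForm A)} {l : List (LForm A)} {x : LForm A}
    (hx : x ∈ l) (h : Deriv p Γ (.base x)) : Deriv p Γ (.base (bigEDisj p l)) := by
  cases l with
  | nil => cases hx
  | cons y t =>
      rcases List.mem_cons.1 hx with rfl | hx
      · exact foldl_edisj_acc t x h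
      · exact foldl_edisj_mem t y x hx h

private theorem foldl_edisj_elim {Γ : Set (SForm A)} {γ : LForm A} :
    ∀ (t : List (LForm A)) (acc : LForm A),
      Deriv p Γ (.base (t.foldl LForm.edisj acc)) →
      Deriv p (insert (.base acc) (safePart Γ)) (.base γ) →
      (∀ x ∈ t, Deriv p (insert (.base x) (safePart Γ)) (.base γ)) →
      Deriv p Γ (.base γ)
  | [], acc, h, hacc, _ => by
      refine h.cut (hacc.weaken ?_)
      intro z hz; rcases hz with rfl | hz
      · exact Set.mem_insert _ _
      · exact Set.mem_insert_of_mem _ hz.1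
  | y :: t, acc, h, hacc, hall => by
      refine foldl_edisj_elim t (LForm.edisj acc y) h ?_ (fun x hx => hall x (by simp [hx]))
      refine .eEDisj (.hyp (Set.mem_insert _ _)) (hacc.weaken ?_) ((hall y (by simp)).weaken ?_) <;>
      · intro z hz
        rcases hz with rfl | hz
        · exact Set.mem_insert _ _
        · exact Set.mem_insert_of_mem _ (mem_safePart (Set.mem_insert_of_mem _ hz) hz.2)

theorem bigEDisj_elim {Γ : Set (SForm A)} {l : List (LForm A)} {γ : LForm A}
    (h : Deriv p Γ (.base (bigEDisj p l)))
    (hall : ∀ x ∈ l, Deriv p (insert (.base x) (safePart Γ)) (.base γ)) :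
    Deriv p Γ (.base γ) := by
  cases l with
  | nil =>
      exact .efq (.eENeg₁ (.eEConj₁ h) (.eEConj₂ h))
  | cons y t =>
      exact foldl_edisj_elim t y h (hall y (by simp)) (fun x hx => hall x (by simp [hx]))

end Folds
-- ===================== Atoms =====================

def LForm.atomsL : LForm A → List A
  | .atom a => [a]
  | .eimp α β => α.atomsL ++ β.atomsL
  | .econj α β => α.atomsL ++ β.atomsL
  | .edisj α β => α.atomsL ++ β.atomsL
  | .eneg α => α.atomsL

def SForm.atomsL : SForm A → List A
  | .base α => α.atomsL
  | .iimp φ ψ => φ.atomsL ++ ψ.atomsL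
  | .iconj φ ψ => φ.atomsL ++ ψ.atomsL
  | .idisj φ ψ => φ.atomsL ++ ψ.atomsL
  | .ineg φ => φ.atomsL

-- ===================== Sigma machinery =====================
section Sigma

variable (p : A) (S : Finset A)

noncomputable local instance : DecidableEq A := Classical.decEq A

/-- Worlds over the finite atom set `S`. -/
abbrev Wd := {a // a ∈ S} → Bool

noncomputable instance : Fintype (Wd S) := by classical exact Pi.instFintype

/-- Extension of a finite world to a full world. -/
noncomputable def extW (f : Wd S) : World A :=
  fun a => if h : a ∈ S then f ⟨a, h⟩ else false

/-- Literal. -/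
def litF (a : A) (b : Bool) : LForm A := if b then .atom a else .eneg (.atom a)

/-- Finite conjunction of a list of L-formulas. -/
def ConjL (L : List (LForm A)) : LForm A :=
  L.foldr .econj (.eimp (.atom p) (.atom p))

theorem conjL_nil {Γ : Set (SForm A)} : Deriv p Γ (.base (ConjL p [])) :=
  .iEImp (.hyp (Set.mem_insert _ _))

theorem conjL_elim {Γ : Set (SForm A)} :
    ∀ {L : List (LForm A)} {x : LForm A}, x ∈ L →
      Deriv p Γ (.base (ConjL p L)) → Deriv p Γ (.base x) := by
  intro L
  induction L with
  | nil => intro x hx; cases hx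
  | cons y t ih =>
      intro x hx h
      rcases List.mem_cons.1 hx with rfl | hx
      · exact .eEConj₁ h
      · exact ih hx (.eEConj₂ h)

theorem conjL_intro {Γ : Set (SForm A)} :
    ∀ {L : List (LForm A)}, (∀ x ∈ L, Deriv p Γ (.base x)) →
      Deriv p Γ (.base (ConjL p L)) := by
  intro L
  induction L with
  | nil => intro _; exact conjL_nil p
  | cons y t ih =>
      intro h
      exact .iEConj (h y (by simp)) (ih (fun x hx => h x (by simp [hx])))

theorem lit_contra {Γ : Set (SForm A)} {a : A} {b c : Bool} (hbc : b ≠ c)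
    (h₁ : Deriv p Γ (.base (litF a b))) (h₂ : Deriv p Γ (.base (litF a c))) :
    Deriv p Γ (botF p) := by
  cases b <;> cases c <;> simp at hbc <;> simp [litF] at h₁ h₂
  · exact .eENeg₁ h₂ h₁
  · exact .eENeg₁ h₁ h₂

/-- Conjunction of literals describing `g` on the atoms in `l`. -/
noncomputable def conjOn (l : List {a // a ∈ S}) (g : Wd S) : LForm A :=
  ConjL p (l.map fun a => litF a.1 (g a))

/-- The canonical description of a finite world. -/
noncomputable def sg (f : Wd S) : LForm A := conjOn p S S.attach.toList f

theorem sg_elim {Γ : Set (SForm A)} {f : Wd S} {a : A} (ha : a ∈ S)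
    (h : Deriv p Γ (.base (sg p S f))) : Deriv p Γ (.base (litF a (f ⟨a, ha⟩))) := by
  refine conjL_elim p ?_ h
  exact List.mem_map.2 ⟨⟨a, ha⟩, Finset.mem_toList.2 (Finset.mem_attach _ _), rfl⟩

theorem sg_contra {Γ : Set (SForm A)} {f g : Wd S} (hfg : f ≠ g)
    (h₁ : Deriv p Γ (.base (sg p S f))) (h₂ : Deriv p Γ (.base (sg p S g))) :
    Deriv p Γ (botF p) := by
  obtain ⟨a, ha⟩ := Function.ne_iff.1 hfg
  exact lit_contra p ha (sg_elim p S a.2 h₁)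
    (by simpa using sg_elim p S a.2 h₂)

/-- Excluded middle for an atom. -/
theorem em_atom {Γ : Set (SForm A)} (a : A) :
    Deriv p Γ (.base (.edisj (.atom a) (.eneg (.atom a)))) := by
  apply Deriv.eENeg₂
  apply Deriv.iENeg
  set D : LForm A := .edisj (.atom a) (.eneg (.atom a)) with hDdef
  set Γ₁ : Set (SForm A) := insert (.base (.eneg D)) (safePart Γ) with hG1
  have hD' : Deriv p Γ₁ (.base (.eneg D)) := .hyp (Set.mem_insert _ _)
  have hna : Deriv p Γ₁ (.base (.eneg (.atom a))) := by
    apply Deriv.iENeg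
    have h1 : Deriv p (insert (.base (.atom a)) (safePart Γ₁)) (.base D) :=
      .iEDisj₁ (.hyp (Set.mem_insert _ _))
    have h2 : Deriv p (insert (.base (.atom a)) (safePart Γ₁)) (.base (.eneg D)) :=
      .hyp (Set.mem_insert_of_mem _ (mem_safePart (Set.mem_insert _ _) (safe_base _)))
    exact .eENeg₁ h1 h2
  exact .eENeg₁ (.iEDisj₂ hna) hD'

/-- All assignments over a list of atoms. -/
noncomputable def funsL : List {a // a ∈ S} → List (Wd S)
  | [] => [fun _ => false]
  | a :: l => ((funsL l).map fun g => Function.update g a true) ++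
      ((funsL l).map fun g => Function.update g a false)

theorem funs_branch {Γ : Set (SForm A)} {a : {a // a ∈ S}} {l : List {a // a ∈ S}}
    (hal : a ∉ l) (b : Bool) (hlit : (.base (litF a.1 b)) ∈ Γ)
    (ihl : ∀ Γ' : Set (SForm A), Deriv p Γ' (.base (bigEDisj p ((funsL S l).map (conjOn p S l))))) :
    Deriv p Γ (.base (bigEDisj p ((funsL S (a :: l)).map (conjOn p S (a :: l))))) := by
  refine bigEDisj_elim (ihl Γ) ?_
  intro x hx
  obtain ⟨g, hg, rfl⟩ := List.mem_map.1 hx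
  have hlit2 : (.base (litF a.1 b)) ∈ insert (SForm.base (conjOn p S l g)) (safePart Γ) :=
    Set.mem_insert_of_mem _ (mem_safePart hlit (safe_base _))
  have hconj : Deriv p (insert (SForm.base (conjOn p S l g)) (safePart Γ))
      (.base (conjOn p S (a :: l) (Function.update g a b))) := by
    apply conjL_intro
    intro x hx
    obtain ⟨a', ha', rfl⟩ := List.mem_map.1 hx
    rcases List.mem_cons.1 ha' with rfl | ha'
    · rw [Function.update_self]
      exact .hyp hlit2
    · rw [Function.update_of_ne (fun h : a' = a => hal (h ▸ ha'))]
      exact conjL_elim p (List.mem_map.2 ⟨a', ha', rfl⟩) (.hyp (Set.mem_insert _ _))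
  refine bigEDisj_intro ?_ hconj
  refine List.mem_map.2 ⟨Function.update g a b, ?_, rfl⟩
  cases b
  · exact List.mem_append.2 (Or.inr (List.mem_map.2 ⟨g, hg, rfl⟩))
  · exact List.mem_append.2 (Or.inl (List.mem_map.2 ⟨g, hg, rfl⟩))

theorem funs_disj {Γ : Set (SForm A)} :
    ∀ l : List {a // a ∈ S}, l.Nodup →
      Deriv p Γ (.base (bigEDisj p ((funsL S l).map (conjOn p S l)))) := by
  intro l
  induction l generalizing Γ with
  | nil =>
      intro _
      have h : (funsL S []).map (conjOn p S []) = [ConjL p []] := rfl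
      rw [h]
      exact conjL_nil p
  | cons a l ih =>
      intro hnd
      have hal : a ∉ l := (List.nodup_cons.1 hnd).1
      have hl : l.Nodup := (List.nodup_cons.1 hnd).2
      refine Deriv.eEDisj (em_atom p a.1) ?_ ?_
      · exact funs_branch p S hal true (Set.mem_insert _ _) (fun Γ' => ih hl)
      · exact funs_branch p S hal false (Set.mem_insert _ _) (fun Γ' => ih hl)

/-- The full disjunction of all world descriptions. -/
theorem allSigma {Γ : Set (SForm A)} :
    Deriv p Γ (.base (bigEDisj p ((Finset.univ : Finset (Wd S)).toList.map (sg p S)))) := by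
  refine bigEDisj_elim (funs_disj p S S.attach.toList (Finset.nodup_toList _)) ?_
  intro x hx
  obtain ⟨g, hg, rfl⟩ := List.mem_map.1 hx
  refine bigEDisj_intro (List.mem_map.2 ⟨g, Finset.mem_toList.2 (Finset.mem_univ _), rfl⟩)
    (.hyp (Set.mem_insert _ _))

end Sigma
section Eval

variable (p : A) (S : Finset A)

theorem eval_lemma {f : Wd S} :
    ∀ γ : LForm A, (∀ a ∈ γ.atomsL, a ∈ S) →
      ∀ Γ : Set (SForm A), (SForm.base (sg p S f) ∈ Γ) →
      (γ.truth (extW S f) = true → Deriv p Γ (.base γ)) ∧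
      (γ.truth (extW S f) = false → Deriv p Γ (.base (.eneg γ))) := by
  intro γ
  induction γ with
  | atom a =>
      intro hat Γ hΓ
      have ha : a ∈ S := hat a (by simp [LForm.atomsL])
      have htr : LForm.truth (extW S f) (.atom a) = f ⟨a, ha⟩ := by
        simp [LForm.truth, extW, dif_pos ha]
      constructor
      · intro h
        have hf : f ⟨a, ha⟩ = true := by rw [← htr]; exact h
        have := sg_elim p S ha (Deriv.hyp hΓ : Deriv p Γ (.base (sg p S f)))
        rwa [hf] at this
      · intro h
        have hf : f ⟨a, ha⟩ = false := by rw [← htr]; exact h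
        have := sg_elim p S ha (Deriv.hyp hΓ : Deriv p Γ (.base (sg p S f)))
        rwa [hf] at this
  | eimp α β ihα ihβ =>
      intro hat Γ hΓ
      have hatα : ∀ a ∈ α.atomsL, a ∈ S := fun a ha => hat a (by simp [LForm.atomsL, ha])
      have hatβ : ∀ a ∈ β.atomsL, a ∈ S := fun a ha => hat a (by simp [LForm.atomsL, ha])
      constructor
      · intro h
        apply Deriv.iEImp
        have hsg' : SForm.base (sg p S f) ∈ insert (SForm.base α) (safePart Γ) :=
          Set.mem_insert_of_mem _ (mem_safePart hΓ (safe_base _))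
        cases hβ : β.truth (extW S f) with
        | true => exact (ihβ hatβ _ hsg').1 hβ
        | false =>
            have hα : α.truth (extW S f) = false := by
              simp [LForm.truth, hβ] at h; exact h
            exact .efq (.eENeg₁ (.hyp (Set.mem_insert _ _)) ((ihα hatα _ hsg').2 hα))
      · intro h
        have hα : α.truth (extW S f) = true := by
          simp [LForm.truth] at h; exact h.1
        have hβ : β.truth (extW S f) = false := by
          simp [LForm.truth] at h; exact h.2
        apply Deriv.iENeg
        have hsg' : SForm.base (sg p S f) ∈
            insert (SForm.base (.eimp α β)) (safePart Γ) :=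
          Set.mem_insert_of_mem _ (mem_safePart hΓ (safe_base _))
        have hb : Deriv p (insert (SForm.base (.eimp α β)) (safePart Γ)) (.base β) :=
          .eEImp ((ihα hatα _ hsg').1 hα) (.hyp (Set.mem_insert _ _))
        exact .eENeg₁ hb ((ihβ hatβ _ hsg').2 hβ)
  | econj α β ihα ihβ =>
      intro hat Γ hΓ
      have hatα : ∀ a ∈ α.atomsL, a ∈ S := fun a ha => hat a (by simp [LForm.atomsL, ha])
      have hatβ : ∀ a ∈ β.atomsL, a ∈ S := fun a ha => hat a (by simp [LForm.atomsL, ha])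
      constructor
      · intro h
        simp [LForm.truth] at h
        exact .iEConj ((ihα hatα _ hΓ).1 h.1) ((ihβ hatβ _ hΓ).1 h.2)
      · intro h
        apply Deriv.iENeg
        have hsg' : SForm.base (sg p S f) ∈
            insert (SForm.base (.econj α β)) (safePart Γ) :=
          Set.mem_insert_of_mem _ (mem_safePart hΓ (safe_base _))
        cases hα : α.truth (extW S f) with
        | false => exact .eENeg₁ (.eEConj₁ (.hyp (Set.mem_insert _ _))) ((ihα hatα _ hsg').2 hα)
        | true =>
            have hβ : β.truth (extW S f) = false := by
              simp [LForm.truth, hα] at h; exact h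
            exact .eENeg₁ (.eEConj₂ (.hyp (Set.mem_insert _ _))) ((ihβ hatβ _ hsg').2 hβ)
  | edisj α β ihα ihβ =>
      intro hat Γ hΓ
      have hatα : ∀ a ∈ α.atomsL, a ∈ S := fun a ha => hat a (by simp [LForm.atomsL, ha])
      have hatβ : ∀ a ∈ β.atomsL, a ∈ S := fun a ha => hat a (by simp [LForm.atomsL, ha])
      constructor
      · intro h
        simp [LForm.truth] at h
        rcases h with h | h
        · exact .iEDisj₁ ((ihα hatα _ hΓ).1 h)
        · exact .iEDisj₂ ((ihβ hatβ _ hΓ).1 h)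
      · intro h
        simp [LForm.truth] at h
        apply Deriv.iENeg
        set Γ' : Set (SForm A) := insert (SForm.base (.edisj α β)) (safePart Γ) with hG'
        have hsg' : SForm.base (sg p S f) ∈ Γ' :=
          Set.mem_insert_of_mem _ (mem_safePart hΓ (safe_base _))
        refine Deriv.eEDisj (.hyp (Set.mem_insert _ _)) ?_ ?_
        · have hsg'' : SForm.base (sg p S f) ∈ insert (SForm.base α) (safePart Γ') :=
            Set.mem_insert_of_mem _ (mem_safePart hsg' (safe_base _))
          exact .eENeg₁ (.hyp (Set.mem_insert _ _)) ((ihα hatα _ hsg'').2 h.1)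
        · have hsg'' : SForm.base (sg p S f) ∈ insert (SForm.base β) (safePart Γ') :=
            Set.mem_insert_of_mem _ (mem_safePart hsg' (safe_base _))
          exact .eENeg₁ (.hyp (Set.mem_insert _ _)) ((ihβ hatβ _ hsg'').2 h.2)
  | eneg α ihα =>
      intro hat Γ hΓ
      have hatα : ∀ a ∈ α.atomsL, a ∈ S := fun a ha => hat a (by simp [LForm.atomsL, ha])
      constructor
      · intro h
        simp [LForm.truth] at h
        exact (ihα hatα _ hΓ).2 h
      · intro h
        simp [LForm.truth] at h
        apply Deriv.iENeg
        have hsg' : SForm.base (sg p S f) ∈ insert (SForm.base (.eneg α)) (safePart Γ) :=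
          Set.mem_insert_of_mem _ (mem_safePart hΓ (safe_base _))
        exact .eENeg₁ ((ihα hatα _ hsg').1 h) (.hyp (Set.mem_insert _ _))

end Eval
section MuXi

variable (p : A) (S : Finset A)

/-- μ for a finite context. -/
noncomputable def MuF (c : Finset (Wd S)) : SForm A := oplus p (c.toList.map (sg p S))

/-- The extensional part of μ. -/
noncomputable def betaF (c : Finset (Wd S)) : SForm A :=
  .base (bigEDisj p (c.toList.map (sg p S)))

/-- ξ for a finite set of finite contexts. -/
noncomputable def XiF (X : Finset (Finset (Wd S))) : SForm A :=
  bigIDisj p (X.toList.map (MuF p S))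

theorem mu_beta {Γ : Set (SForm A)} {c : Finset (Wd S)}
    (h : Deriv p Γ (MuF p S c)) : Deriv p Γ (betaF p S c) := .eIConj₁ h

theorem mu_dia {Γ : Set (SForm A)} {c : Finset (Wd S)} {f : Wd S} (hf : f ∈ c)
    (h : Deriv p Γ (MuF p S c)) : Deriv p Γ (dia p (.base (sg p S f))) := by
  refine bigIConj_elim ?_ (Deriv.eIConj₂ h)
  exact List.mem_map.2 ⟨sg p S f, List.mem_map.2 ⟨f, Finset.mem_toList.2 hf, rfl⟩, rfl⟩

theorem mu_intro {Γ : Set (SForm A)} {c : Finset (Wd S)}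
    (hβ : Deriv p Γ (betaF p S c))
    (hd : ∀ f ∈ c, Deriv p Γ (dia p (.base (sg p S f)))) : Deriv p Γ (MuF p S c) := by
  refine .iIConj hβ (bigIConj_intro ?_)
  intro x hx
  obtain ⟨α, hα, rfl⟩ := List.mem_map.1 hx
  obtain ⟨f, hf, rfl⟩ := List.mem_map.1 hα
  exact hd f (Finset.mem_toList.1 hf)

theorem beta_elim {Γ : Set (SForm A)} {c : Finset (Wd S)} {γ : LForm A}
    (h : Deriv p Γ (betaF p S c))
    (hall : ∀ f ∈ c, Deriv p (insert (.base (sg p S f)) (safePart Γ)) (.base γ)) :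
    Deriv p Γ (.base γ) := by
  refine bigEDisj_elim h ?_
  intro x hx
  obtain ⟨f, hf, rfl⟩ := List.mem_map.1 hx
  exact hall f (Finset.mem_toList.1 hf)

theorem sigma_bot {Γ : Set (SForm A)} {c : Finset (Wd S)} {f : Wd S} (hf : f ∉ c)
    (hβ : betaF p S c ∈ Γ) :
    Deriv p Γ (SForm.iimp (.base (sg p S f)) (botF p)) := by
  apply Deriv.iIImp
  set Γ' : Set (SForm A) := insert (SForm.base (sg p S f)) (safePart Γ) with hG'
  have hβ' : Deriv p Γ' (betaF p S c) :=
    .hyp (Set.mem_insert_of_mem _ (mem_safePart hβ (safe_base _)))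
  refine beta_elim p S hβ' ?_
  intro g hg
  have h₁ : Deriv p (insert (SForm.base (sg p S g)) (safePart Γ')) (.base (sg p S f)) :=
    .hyp (Set.mem_insert_of_mem _ (mem_safePart (Set.mem_insert _ _) (safe_base _)))
  have h₂ : Deriv p (insert (SForm.base (sg p S g)) (safePart Γ')) (.base (sg p S g)) :=
    .hyp (Set.mem_insert _ _)
  exact sg_contra p S (by rintro rfl; exact hf hg) h₁ h₂

theorem dia_bot {Γ : Set (SForm A)} {φ : SForm A}
    (h₁ : Deriv p Γ (dia p φ)) (h₂ : Deriv p Γ (SForm.iimp φ (botF p))) :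
    Deriv p Γ (botF p) := .eINeg h₂ h₁

theorem mu_mu_aux {Γ : Set (SForm A)} {c d : Finset (Wd S)} {f : Wd S}
    (hfc : f ∈ c) (hfd : f ∉ d)
    (h₁ : Deriv p Γ (MuF p S c)) (h₂ : Deriv p Γ (MuF p S d)) :
    Deriv p Γ (botF p) := by
  refine (mu_beta p S h₂).cut ?_
  refine dia_bot p ((mu_dia p S hfc h₁).weaken (Set.subset_insert _ _)) ?_
  exact sigma_bot p S hfd (Set.mem_insert _ _)

theorem mu_mu_contra {Γ : Set (SForm A)} {c d : Finset (Wd S)} (hcd : c ≠ d)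
    (h₁ : Deriv p Γ (MuF p S c)) (h₂ : Deriv p Γ (MuF p S d)) :
    Deriv p Γ (botF p) := by
  have : ∃ f, (f ∈ c ∧ f ∉ d) ∨ (f ∈ d ∧ f ∉ c) := by
    by_contra hno
    push_neg at hno
    exact hcd (Finset.ext fun f => ⟨(hno f).1, (hno f).2⟩)
  obtain ⟨f, ⟨hfc, hfd⟩ | ⟨hfd, hfc⟩⟩ := this
  · exact mu_mu_aux p S hfc hfd h₁ h₂
  · exact mu_mu_aux p S hfd hfc h₂ h₁

theorem xi_intro {Γ : Set (SForm A)} {X : Finset (Finset (Wd S))} {c : Finset (Wd S)}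
    (hc : c ∈ X) (h : Deriv p Γ (MuF p S c)) : Deriv p Γ (XiF p S X) :=
  bigIDisj_intro (List.mem_map.2 ⟨c, Finset.mem_toList.2 hc, rfl⟩) h

theorem xi_elim {Γ : Set (SForm A)} {X : Finset (Finset (Wd S))} {χ : SForm A}
    (h : Deriv p Γ (XiF p S X))
    (hall : ∀ c ∈ X, Deriv p (insert (MuF p S c) Γ) χ) : Deriv p Γ χ := by
  refine bigIDisj_elim h ?_
  intro x hx
  obtain ⟨c, hc, rfl⟩ := List.mem_map.1 hx
  exact hall c (Finset.mem_toList.1 hc)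

theorem xi_mono {Γ : Set (SForm A)} {X Y : Finset (Finset (Wd S))} (hXY : X ⊆ Y)
    (h : Deriv p Γ (XiF p S X)) : Deriv p Γ (XiF p S Y) := by
  refine xi_elim p S h (fun c hc => ?_)
  exact xi_intro p S (hXY hc) (.hyp (Set.mem_insert _ _))

/-- The set of all nonempty finite contexts. -/
noncomputable def FullX : Finset (Finset (Wd S)) :=
  Finset.univ.filter Finset.Nonempty

theorem cem_split {Γ : Set (SForm A)} :
    ∀ (L : List (Wd S)) (T : Finset (Wd S)),
      (∀ f ∈ T, dia p (.base (sg p S f)) ∈ Γ) →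
      (∀ f : Wd S, f ∉ T → f ∉ L → SForm.iimp (.base (sg p S f)) (botF p) ∈ Γ) →
      Deriv p Γ (XiF p S (FullX S)) := by
  intro L
  induction L generalizing Γ with
  | nil =>
      intro T hdia himp
      have hβ : Deriv p Γ (betaF p S T) := by
        refine bigEDisj_elim (allSigma p S) ?_
        intro x hx
        obtain ⟨g, hg, rfl⟩ := List.mem_map.1 hx
        by_cases hgT : g ∈ T
        · exact bigEDisj_intro (List.mem_map.2 ⟨g, Finset.mem_toList.2 hgT, rfl⟩)
            (.hyp (Set.mem_insert _ _))
        · have himp' : SForm.iimp (.base (sg p S g)) (botF p) ∈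
              insert (SForm.base (sg p S g)) (safePart Γ) :=
            Set.mem_insert_of_mem _
              (mem_safePart (himp g hgT (by simp)) (safe_iimp _ _))
          exact .efq (.eIImp (.hyp (Set.mem_insert _ _)) (.hyp himp'))
      by_cases hT : T = ∅
      · subst hT
        have hb : betaF p S (∅ : Finset (Wd S)) = botF p := by
          simp [betaF, bigEDisj, botF]
        rw [hb] at hβ
        exact .efq hβ
      · refine xi_intro p S ?_ (mu_intro p S hβ (fun f hf => .hyp (hdia f hf)))
        exact Finset.mem_filter.2 ⟨Finset.mem_univ _, Finset.nonempty_iff_ne_empty.2 hT⟩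
  | cons f L ih =>
      intro T hdia himp
      have hcem : Deriv p Γ (.idisj (.iimp (.base (sg p S f)) (botF p))
          (dia p (.base (sg p S f)))) := .cem
      refine .eIDisj hcem ?_ ?_
      · refine ih T (fun g hg => Set.mem_insert_of_mem _ (hdia g hg)) ?_
        intro g hgT hgL
        by_cases hgf : g = f
        · subst hgf; exact Set.mem_insert _ _
        · exact Set.mem_insert_of_mem _ (himp g hgT (by simp [hgf, hgL]))
      · refine ih (insert f T) ?_ ?_
        · intro g hg
          rcases Finset.mem_insert.1 hg with rfl | hg
          · exact Set.mem_insert _ _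
          · exact Set.mem_insert_of_mem _ (hdia g hg)
        · intro g hgT hgL
          have hgf : g ≠ f := fun h => hgT (h ▸ Finset.mem_insert_self f T)
          exact Set.mem_insert_of_mem _
            (himp g (fun h => hgT (Finset.mem_insert_of_mem h)) (by simp [hgf, hgL]))

theorem xiFull {Γ : Set (SForm A)} : Deriv p Γ (XiF p S (FullX S)) := by
  refine cem_split p S Finset.univ.toList ∅ (by simp) ?_
  intro f _ hf
  exact absurd (Finset.mem_toList.2 (Finset.mem_univ f)) hf

end MuXi
section Sem

variable (p : A) (S : Finset A)

attribute [local instance] Classical.propDecidable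

/-- The context associated with a finite context. -/
noncomputable def CtxF (c : Finset (Wd S)) : Context A := (extW S) '' ↑c

/-- The finite contexts asserting φ. -/
noncomputable def XfF (φ : SForm A) : Finset (Finset (Wd S)) :=
  Finset.univ.filter (fun c => c.Nonempty ∧ Assert (CtxF S c) φ)

/-- The finite contexts denying φ. -/
noncomputable def DfF (φ : SForm A) : Finset (Finset (Wd S)) :=
  Finset.univ.filter (fun c => c.Nonempty ∧ Deny (CtxF S c) φ)

theorem mem_XfF {φ : SForm A} {c : Finset (Wd S)} :
    c ∈ XfF S φ ↔ c.Nonempty ∧ Assert (CtxF S c) φ := by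
  simp [XfF]

theorem mem_DfF {φ : SForm A} {c : Finset (Wd S)} :
    c ∈ DfF S φ ↔ c.Nonempty ∧ Deny (CtxF S c) φ := by
  simp [DfF]

theorem ctxF_nonempty {c : Finset (Wd S)} (hc : c.Nonempty) : (CtxF S c).Nonempty := by
  obtain ⟨f, hf⟩ := hc
  exact ⟨extW S f, ⟨f, hf, rfl⟩⟩

theorem ctxF_mono {c d : Finset (Wd S)} (h : d ⊆ c) : CtxF S d ⊆ CtxF S c :=
  Set.image_mono (by exact_mod_cast h)

theorem ctx_sub {c : Finset (Wd S)} {D : Context A} (hsub : D ⊆ CtxF S c) :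
    ∃ d : Finset (Wd S), d ⊆ c ∧ CtxF S d = D ∧ (D.Nonempty → d.Nonempty) := by
  refine ⟨c.filter (fun f => extW S f ∈ D), Finset.filter_subset _ _, ?_, ?_⟩
  · apply Set.eq_of_subset_of_subset
    · rintro x ⟨f, hf, rfl⟩
      exact (Finset.mem_filter.1 (Finset.mem_coe.1 hf)).2
    · intro x hx
      obtain ⟨f, hf, rfl⟩ := hsub hx
      exact ⟨f, Finset.mem_coe.2 (Finset.mem_filter.2 ⟨Finset.mem_coe.1 hf, hx⟩), rfl⟩
  · rintro ⟨x, hx⟩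
    obtain ⟨f, hf, rfl⟩ := hsub hx
    exact ⟨f, Finset.mem_filter.2 ⟨Finset.mem_coe.1 hf, hx⟩⟩

theorem assert_base_iff {c : Finset (Wd S)} {γ : LForm A} :
    Assert (CtxF S c) (.base γ) ↔ ∀ f ∈ c, γ.truth (extW S f) = true := by
  constructor
  · intro h f hf
    exact h (extW S f) ⟨f, hf, rfl⟩
  · rintro h w ⟨f, hf, rfl⟩
    exact h f (by exact_mod_cast hf)

theorem deny_base_iff {c : Finset (Wd S)} {γ : LForm A} :
    Deny (CtxF S c) (.base γ) ↔ ∀ f ∈ c, γ.truth (extW S f) = false := by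
  constructor
  · intro h f hf
    exact h (extW S f) ⟨f, hf, rfl⟩
  · rintro h w ⟨f, hf, rfl⟩
    exact h f (by exact_mod_cast hf)

theorem assert_imp_iff {c : Finset (Wd S)} {φ ψ : SForm A} :
    Assert (CtxF S c) (.iimp φ ψ) ↔
      ∀ d : Finset (Wd S), d.Nonempty → d ⊆ c →
        Assert (CtxF S d) φ → Assert (CtxF S d) ψ := by
  constructor
  · intro h d hdne hdc hφ
    exact h (CtxF S d) (ctxF_nonempty S hdne) (ctxF_mono S hdc) hφ
  · intro h D hDne hDsub hφ
    obtain ⟨d, hdc, rfl, hne⟩ := ctx_sub S hDsub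
    exact h d (hne hDne) hdc hφ

theorem deny_imp_iff {c : Finset (Wd S)} {φ ψ : SForm A} :
    Deny (CtxF S c) (.iimp φ ψ) ↔
      ∃ d : Finset (Wd S), d.Nonempty ∧ d ⊆ c ∧
        Assert (CtxF S d) φ ∧ Deny (CtxF S d) ψ := by
  constructor
  · rintro ⟨D, hDne, hDsub, hφ, hψ⟩
    obtain ⟨d, hdc, rfl, hne⟩ := ctx_sub S hDsub
    exact ⟨d, hne hDne, hdc, hφ, hψ⟩
  · rintro ⟨d, hdne, hdc, hφ, hψ⟩
    exact ⟨CtxF S d, ctxF_nonempty S hdne, ctxF_mono S hdc, hφ, hψ⟩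

theorem assert_iconj_iff {C : Context A} {φ ψ : SForm A} :
    Assert C (.iconj φ ψ) ↔ Assert C φ ∧ Assert C ψ := Iff.rfl

theorem assert_idisj_iff {C : Context A} {φ ψ : SForm A} :
    Assert C (.idisj φ ψ) ↔ Assert C φ ∨ Assert C ψ := Iff.rfl

theorem assert_ineg_iff {C : Context A} {φ : SForm A} :
    Assert C (.ineg φ) ↔ Deny C φ := Iff.rfl

theorem deny_iconj_iff {C : Context A} {φ ψ : SForm A} :
    Deny C (.iconj φ ψ) ↔ Deny C φ ∨ Deny C ψ := Iff.rfl

theorem deny_idisj_iff {C : Context A} {φ ψ : SForm A} :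
    Deny C (.idisj φ ψ) ↔ Deny C φ ∧ Deny C ψ := Iff.rfl

theorem deny_ineg_iff {C : Context A} {φ : SForm A} :
    Deny C (.ineg φ) ↔ Assert C φ := Iff.rfl

end Sem
section Helpers

variable (p : A) (S : Finset A)

theorem mu_sub_bot {Γ : Set (SForm A)} {c d : Finset (Wd S)} (hnd : ¬ d ⊆ c)
    (hβ : betaF p S c ∈ Γ) (h : Deriv p Γ (MuF p S d)) : Deriv p Γ (botF p) := by
  obtain ⟨f, hfd, hfc⟩ := Finset.not_subset.1 hnd
  exact dia_bot p (mu_dia p S hfd h) (sigma_bot p S hfc hβ)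

theorem dia_mu {Γ : Set (SForm A)} {d : Finset (Wd S)} (hdne : d.Nonempty)
    (h : ∀ f ∈ d, Deriv p Γ (dia p (.base (sg p S f)))) :
    Deriv p Γ (dia p (MuF p S d)) := by
  show Deriv p Γ (dia p (oplus p (d.toList.map (sg p S))))
  refine Deriv.diaOplus ?_ ?_
  · simp only [ne_eq, List.map_eq_nil_iff, Finset.toList_eq_nil]
    exact Finset.nonempty_iff_ne_empty.1 hdne
  · refine bigIConj_intro ?_
    intro x hx
    obtain ⟨α, hα, rfl⟩ := List.mem_map.1 hx
    obtain ⟨f, hf, rfl⟩ := List.mem_map.1 hα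
    exact h f (Finset.mem_toList.1 hf)

theorem dia_mono {Γ : Set (SForm A)} {θ χ : SForm A} (hthm : Thm p (.iimp θ χ))
    (h : Deriv p Γ (dia p θ)) : Deriv p Γ (dia p χ) := by
  have hcem : Deriv p Γ (.idisj (.iimp χ (botF p)) (dia p χ)) := .cem
  refine .eIDisj hcem ?_ (.hyp (Set.mem_insert _ _))
  have himp : Deriv p (insert (SForm.iimp χ (botF p)) Γ) (.iimp θ (botF p)) := by
    apply Deriv.iIImp
    have hχ : Deriv p (insert θ (safePart (insert (SForm.iimp χ (botF p)) Γ))) χ :=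
      hthm.mp (.hyp (Set.mem_insert _ _))
    exact .eIImp hχ (.hyp (Set.mem_insert_of_mem _
      (mem_safePart (Set.mem_insert _ _) (safe_iimp _ _))))
  exact .efq (dia_bot p (h.weaken (Set.subset_insert _ _)) himp)

theorem xi_inter {Γ : Set (SForm A)} {X Y : Finset (Finset (Wd S))}
    (h₁ : Deriv p Γ (XiF p S X)) (h₂ : Deriv p Γ (XiF p S Y)) :
    Deriv p Γ (XiF p S (X ∩ Y)) := by
  refine xi_elim p S h₁ (fun c hc => ?_)
  refine xi_elim p S (h₂.weaken (Set.subset_insert _ _)) (fun d hd => ?_)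
  by_cases hcd : c = d
  · subst hcd
    exact xi_intro p S (Finset.mem_inter.2 ⟨hc, hd⟩) (.hyp (Set.mem_insert _ _))
  · exact .efq (mu_mu_contra p S hcd
      (.hyp (Set.mem_insert_of_mem _ (Set.mem_insert _ _))) (.hyp (Set.mem_insert _ _)))

theorem mem_FullX {T : Finset (Wd S)} : T ∈ FullX S ↔ T.Nonempty := by
  simp [FullX]

theorem safe_ineg_base (γ : LForm A) : Safe (SForm.ineg (.base γ) : SForm A) := Or.inl rfl

-- ============ base case of the normal form theorem ============

theorem base_forward {γ : LForm A} (hat : ∀ a ∈ γ.atomsL, a ∈ S) :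
    Thm p (.iimp (.base γ) (XiF p S (XfF S (.base γ)))) := by
  refine thm_imp_intro (fun Γ hγ => ?_)
  refine xi_elim p S (xiFull p S) (fun T hT => ?_)
  have hTne : T.Nonempty := (mem_FullX S).1 hT
  by_cases hTX : T ∈ XfF S (.base γ)
  · exact xi_intro p S hTX (.hyp (Set.mem_insert _ _))
  · have : ¬ ∀ f ∈ T, γ.truth (extW S f) = true := by
      intro hall
      exact hTX (mem_XfF S |>.2 ⟨hTne, (assert_base_iff S).2 hall⟩)
    push_neg at this
    obtain ⟨f, hfT, hfγ⟩ := this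
    have hfγ' : γ.truth (extW S f) = false := by
      cases h : γ.truth (extW S f)
      · rfl
      · exact absurd h hfγ
    have hdia : Deriv p (insert (MuF p S T) Γ) (dia p (.base (sg p S f))) :=
      mu_dia p S hfT (.hyp (Set.mem_insert _ _))
    have himp : Deriv p (insert (MuF p S T) Γ) (.iimp (.base (sg p S f)) (botF p)) := by
      apply Deriv.iIImp
      set Γ₂ : Set (SForm A) :=
        insert (SForm.base (sg p S f)) (safePart (insert (MuF p S T) Γ)) with hG2
      have hγ₂ : SForm.base γ ∈ Γ₂ :=
        Set.mem_insert_of_mem _ (mem_safePart (Set.mem_insert_of_mem _ hγ) (safe_base _))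
      have hnγ : Deriv p Γ₂ (.base (.eneg γ)) :=
        (eval_lemma p S γ hat Γ₂ (Set.mem_insert _ _)).2 hfγ'
      exact .eENeg₁ (.hyp hγ₂) hnγ
    exact .efq (dia_bot p hdia himp)

theorem base_backward {γ : LForm A} (hat : ∀ a ∈ γ.atomsL, a ∈ S) :
    Thm p (.iimp (XiF p S (XfF S (.base γ))) (.base γ)) := by
  refine thm_imp_intro (fun Γ hXi => ?_)
  refine xi_elim p S (.hyp hXi) (fun c hc => ?_)
  have hcA : ∀ f ∈ c, γ.truth (extW S f) = true :=
    (assert_base_iff S).1 ((mem_XfF S).1 hc).2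
  refine beta_elim p S (mu_beta p S (.hyp (Set.mem_insert _ _))) (fun f hf => ?_)
  exact (eval_lemma p S γ hat _ (Set.mem_insert _ _)).1 (hcA f hf)

theorem neg_base_forward (γ : LForm A) :
    Thm p (.iimp (.ineg (.base γ)) (.base (.eneg γ))) := by
  refine thm_imp_intro (fun Γ hn => ?_)
  apply Deriv.iENeg
  exact .eINeg (.hyp (Set.mem_insert _ _))
    (.hyp (Set.mem_insert_of_mem _ (mem_safePart hn (safe_ineg_base γ))))

theorem neg_base_backward (γ : LForm A) :
    Thm p (.iimp (.base (.eneg γ)) (.ineg (.base γ))) := by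
  refine thm_imp_intro (fun Γ hn => ?_)
  apply Deriv.iINeg
  exact .eENeg₁ (.hyp (Set.mem_insert _ _))
    (.hyp (Set.mem_insert_of_mem _ (mem_safePart hn (safe_base _))))

theorem Df_base (γ : LForm A) : DfF S (.base γ) = XfF S (.base (.eneg γ)) := by
  refine Finset.ext (fun c => ?_)
  rw [mem_DfF, mem_XfF, deny_base_iff, assert_base_iff]
  simp [LForm.truth]

end Helpers
section Normal

variable (p : A) (S : Finset A)

theorem Xf_ineg (φ : SForm A) : XfF S (.ineg φ) = DfF S φ := by
  refine Finset.ext (fun c => ?_)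
  rw [mem_XfF, mem_DfF]; exact Iff.rfl

theorem Df_ineg (φ : SForm A) : DfF S (.ineg φ) = XfF S φ := by
  refine Finset.ext (fun c => ?_)
  rw [mem_XfF, mem_DfF]; exact Iff.rfl

theorem Xf_iconj (φ ψ : SForm A) : XfF S (.iconj φ ψ) = XfF S φ ∩ XfF S ψ := by
  refine Finset.ext (fun c => ?_)
  simp only [mem_XfF, Finset.mem_inter, assert_iconj_iff]
  tauto

theorem Df_iconj (φ ψ : SForm A) : DfF S (.iconj φ ψ) = DfF S φ ∪ DfF S ψ := by
  refine Finset.ext (fun c => ?_)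
  simp only [mem_DfF, Finset.mem_union, deny_iconj_iff]
  tauto

theorem Xf_idisj (φ ψ : SForm A) : XfF S (.idisj φ ψ) = XfF S φ ∪ XfF S ψ := by
  refine Finset.ext (fun c => ?_)
  simp only [mem_XfF, Finset.mem_union, assert_idisj_iff]
  tauto

theorem Df_idisj (φ ψ : SForm A) : DfF S (.idisj φ ψ) = DfF S φ ∩ DfF S ψ := by
  refine Finset.ext (fun c => ?_)
  simp only [mem_DfF, Finset.mem_inter, deny_idisj_iff]
  tauto

theorem mem_Xf_iimp {T : Finset (Wd S)} {φ ψ : SForm A} :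
    T ∈ XfF S (.iimp φ ψ) ↔
      T.Nonempty ∧ ∀ d, d.Nonempty → d ⊆ T → d ∈ XfF S φ → d ∈ XfF S ψ := by
  rw [mem_XfF, assert_imp_iff]
  constructor
  · rintro ⟨hne, h⟩
    exact ⟨hne, fun d hdne hdT hdφ =>
      (mem_XfF S).2 ⟨hdne, h d hdne hdT ((mem_XfF S).1 hdφ).2⟩⟩
  · rintro ⟨hne, h⟩
    exact ⟨hne, fun d hdne hdT hA =>
      ((mem_XfF S).1 (h d hdne hdT ((mem_XfF S).2 ⟨hdne, hA⟩))).2⟩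

theorem mem_Df_iimp {T : Finset (Wd S)} {φ ψ : SForm A} :
    T ∈ DfF S (.iimp φ ψ) ↔
      T.Nonempty ∧ ∃ d, d ⊆ T ∧ d ∈ XfF S φ ∧ d ∈ DfF S ψ := by
  rw [mem_DfF, deny_imp_iff]
  constructor
  · rintro ⟨hne, d, hdne, hdT, hφ, hψ⟩
    exact ⟨hne, d, hdT, (mem_XfF S).2 ⟨hdne, hφ⟩, (mem_DfF S).2 ⟨hdne, hψ⟩⟩
  · rintro ⟨hne, d, hdT, hφ, hψ⟩
    exact ⟨hne, d, ((mem_XfF S).1 hφ).1, hdT, ((mem_XfF S).1 hφ).2, ((mem_DfF S).1 hψ).2⟩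

/-- The normal form theorem: every formula (and its negation) is provably
equivalent to a canonical disjunction of μ's. -/
theorem normal_form : ∀ φ : SForm A, (∀ a ∈ φ.atomsL, a ∈ S) →
    (Thm p (.iimp φ (XiF p S (XfF S φ))) ∧ Thm p (.iimp (XiF p S (XfF S φ)) φ)) ∧
    (Thm p (.iimp (.ineg φ) (XiF p S (DfF S φ))) ∧
      Thm p (.iimp (XiF p S (DfF S φ)) (.ineg φ))) := by
  intro φ
  induction φ with
  | base γ =>
      intro hat
      refine ⟨⟨base_forward p S hat, base_backward p S hat⟩, ?_, ?_⟩
      · rw [Df_base]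
        exact imp_trans (neg_base_forward p γ) (base_forward p S hat)
      · rw [Df_base]
        exact imp_trans (base_backward p S hat) (neg_base_backward p γ)
  | ineg φ ih =>
      intro hat
      obtain ⟨⟨pf, pb⟩, pnf, pnb⟩ := ih hat
      refine ⟨⟨?_, ?_⟩, ?_, ?_⟩
      · rw [Xf_ineg]; exact pnf
      · rw [Xf_ineg]; exact pnb
      · rw [Df_ineg]
        exact thm_imp_intro (fun Γ h => pf.mp (.negNeg₁ (.hyp h)))
      · rw [Df_ineg]
        exact thm_imp_intro (fun Γ h => .negNeg₂ (pb.mp (.hyp h)))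
  | iconj φ ψ ihφ ihψ =>
      intro hat
      obtain ⟨⟨pf, pb⟩, pnf, pnb⟩ := ihφ (fun a ha => hat a (by simp [SForm.atomsL, ha]))
      obtain ⟨⟨qf, qb⟩, qnf, qnb⟩ := ihψ (fun a ha => hat a (by simp [SForm.atomsL, ha]))
      refine ⟨⟨?_, ?_⟩, ?_, ?_⟩
      · rw [Xf_iconj]
        refine thm_imp_intro (fun Γ h => ?_)
        exact xi_inter p S (pf.mp (.eIConj₁ (.hyp h))) (qf.mp (.eIConj₂ (.hyp h)))
      · rw [Xf_iconj]
        refine thm_imp_intro (fun Γ h => ?_)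
        refine xi_elim p S (.hyp h) (fun c hc => ?_)
        exact .iIConj
          (pb.mp (xi_intro p S (Finset.mem_inter.1 hc).1 (.hyp (Set.mem_insert _ _))))
          (qb.mp (xi_intro p S (Finset.mem_inter.1 hc).2 (.hyp (Set.mem_insert _ _))))
      · rw [Df_iconj]
        refine thm_imp_intro (fun Γ h => ?_)
        refine .eIDisj (Deriv.negConj₁ (.hyp h)) ?_ ?_
        · exact xi_mono p S Finset.subset_union_left (pnf.mp (.hyp (Set.mem_insert _ _)))
        · exact xi_mono p S Finset.subset_union_right (qnf.mp (.hyp (Set.mem_insert _ _)))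
      · rw [Df_iconj]
        refine thm_imp_intro (fun Γ h => ?_)
        refine xi_elim p S (.hyp h) (fun c hc => ?_)
        rcases Finset.mem_union.1 hc with hc | hc
        · exact .negConj₂ (.iIDisj₁ (pnb.mp (xi_intro p S hc (.hyp (Set.mem_insert _ _)))))
        · exact .negConj₂ (.iIDisj₂ (qnb.mp (xi_intro p S hc (.hyp (Set.mem_insert _ _)))))
  | idisj φ ψ ihφ ihψ =>
      intro hat
      obtain ⟨⟨pf, pb⟩, pnf, pnb⟩ := ihφ (fun a ha => hat a (by simp [SForm.atomsL, ha]))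
      obtain ⟨⟨qf, qb⟩, qnf, qnb⟩ := ihψ (fun a ha => hat a (by simp [SForm.atomsL, ha]))
      refine ⟨⟨?_, ?_⟩, ?_, ?_⟩
      · rw [Xf_idisj]
        refine thm_imp_intro (fun Γ h => ?_)
        refine .eIDisj (.hyp h) ?_ ?_
        · exact xi_mono p S Finset.subset_union_left (pf.mp (.hyp (Set.mem_insert _ _)))
        · exact xi_mono p S Finset.subset_union_right (qf.mp (.hyp (Set.mem_insert _ _)))
      · rw [Xf_idisj]
        refine thm_imp_intro (fun Γ h => ?_)
        refine xi_elim p S (.hyp h) (fun c hc => ?_)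
        rcases Finset.mem_union.1 hc with hc | hc
        · exact .iIDisj₁ (pb.mp (xi_intro p S hc (.hyp (Set.mem_insert _ _))))
        · exact .iIDisj₂ (qb.mp (xi_intro p S hc (.hyp (Set.mem_insert _ _))))
      · rw [Df_idisj]
        refine thm_imp_intro (fun Γ h => ?_)
        have hd : Deriv p Γ (.iconj (.ineg φ) (.ineg ψ)) := .negDisj₁ (.hyp h)
        exact xi_inter p S (pnf.mp (.eIConj₁ hd)) (qnf.mp (.eIConj₂ hd))
      · rw [Df_idisj]
        refine thm_imp_intro (fun Γ h => ?_)
        refine xi_elim p S (.hyp h) (fun c hc => ?_)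
        exact .negDisj₂ (.iIConj
          (pnb.mp (xi_intro p S (Finset.mem_inter.1 hc).1 (.hyp (Set.mem_insert _ _))))
          (qnb.mp (xi_intro p S (Finset.mem_inter.1 hc).2 (.hyp (Set.mem_insert _ _)))))
  | iimp φ ψ ihφ ihψ =>
      intro hat
      obtain ⟨⟨pf, pb⟩, pnf, pnb⟩ := ihφ (fun a ha => hat a (by simp [SForm.atomsL, ha]))
      obtain ⟨⟨qf, qb⟩, qnf, qnb⟩ := ihψ (fun a ha => hat a (by simp [SForm.atomsL, ha]))
      refine ⟨⟨?_, ?_⟩, ?_, ?_⟩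
      · -- (φ→ψ) ⟶ Ξ Z
        refine thm_imp_intro (fun Γ hI => ?_)
        refine xi_elim p S (xiFull p S) (fun T hT => ?_)
        have hTne : T.Nonempty := (mem_FullX S).1 hT
        by_cases hTZ : T ∈ XfF S (.iimp φ ψ)
        · exact xi_intro p S hTZ (.hyp (Set.mem_insert _ _))
        · have hex : ∃ d, d.Nonempty ∧ d ⊆ T ∧ d ∈ XfF S φ ∧ d ∉ XfF S ψ := by
            have h1 : ¬ ∀ d, d.Nonempty → d ⊆ T → d ∈ XfF S φ → d ∈ XfF S ψ :=
              fun hall => hTZ ((mem_Xf_iimp S).2 ⟨hTne, hall⟩)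
            push_neg at h1
            exact h1
          obtain ⟨d, hdne, hdT, hdφ, hdψ⟩ := hex
          have hdiaMu : Deriv p (insert (MuF p S T) Γ) (dia p (MuF p S d)) :=
            dia_mu p S hdne (fun f hf => mu_dia p S (hdT hf) (.hyp (Set.mem_insert _ _)))
          have himp : Deriv p (insert (MuF p S T) Γ) (.iimp (MuF p S d) (botF p)) := by
            apply Deriv.iIImp
            set Γ₂ : Set (SForm A) :=
              insert (MuF p S d) (safePart (insert (MuF p S T) Γ)) with hG2
            have hI₂ : SForm.iimp φ ψ ∈ Γ₂ :=
              Set.mem_insert_of_mem _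
                (mem_safePart (Set.mem_insert_of_mem _ hI) (safe_iimp _ _))
            have hφ : Deriv p Γ₂ φ := pb.mp (xi_intro p S hdφ (.hyp (Set.mem_insert _ _)))
            have hψ : Deriv p Γ₂ ψ := .eIImp hφ (.hyp hI₂)
            refine xi_elim p S (qf.mp hψ) (fun e he => ?_)
            refine mu_mu_contra p S (fun hde : d = e => hdψ (by rw [hde]; exact he)) ?_ ?_
            · exact .hyp (Set.mem_insert_of_mem _ (Set.mem_insert _ _))
            · exact .hyp (Set.mem_insert _ _)
          exact .efq (dia_bot p hdiaMu himp)
      · -- Ξ Z ⟶ (φ→ψ)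
        refine thm_imp_intro (fun Γ hXi => ?_)
        refine xi_elim p S (.hyp hXi) (fun c hc => ?_)
        have hcZ := (mem_Xf_iimp S).1 hc
        refine (mu_beta p S (.hyp (Set.mem_insert _ _))).cut ?_
        apply Deriv.iIImp
        set Γ₃ : Set (SForm A) :=
          insert φ (safePart (insert (betaF p S c) (insert (MuF p S c) Γ))) with hG3
        have hβ₃ : betaF p S c ∈ Γ₃ :=
          Set.mem_insert_of_mem _ (mem_safePart (Set.mem_insert _ _) (safe_base _))
        refine xi_elim p S (pf.mp (.hyp (Set.mem_insert _ _))) (fun d hd => ?_)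
        by_cases hdc : d ⊆ c
        · have hdψ : d ∈ XfF S ψ := hcZ.2 d ((mem_XfF S).1 hd).1 hdc hd
          exact qb.mp (xi_intro p S hdψ (.hyp (Set.mem_insert _ _)))
        · exact .efq (mu_sub_bot p S hdc (Set.mem_insert_of_mem _ hβ₃)
            (.hyp (Set.mem_insert _ _)))
      · -- ¬(φ→ψ) ⟶ Ξ V
        refine thm_imp_intro (fun Γ hn => ?_)
        have hdia : Deriv p Γ (dia p (.iconj φ (.ineg ψ))) := .negImp₁ (.hyp hn)
        refine xi_elim p S (xiFull p S) (fun T hT => ?_)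
        have hTne : T.Nonempty := (mem_FullX S).1 hT
        by_cases hTV : T ∈ DfF S (.iimp φ ψ)
        · exact xi_intro p S hTV (.hyp (Set.mem_insert _ _))
        · have hnex : ∀ d, d ⊆ T → d ∈ XfF S φ → d ∈ DfF S ψ → False := by
            intro d h1 h2 h3
            exact hTV ((mem_Df_iimp S).2 ⟨hTne, d, h1, h2, h3⟩)
          refine (mu_beta p S (.hyp (Set.mem_insert _ _))).cut ?_
          set Γ₂ : Set (SForm A) := insert (betaF p S T) (insert (MuF p S T) Γ) with hG2
          have hdia₂ : Deriv p Γ₂ (dia p (.iconj φ (.ineg ψ))) :=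
            (hdia.weaken (Set.subset_insert _ _)).weaken (Set.subset_insert _ _)
          have himp : Deriv p Γ₂ (.iimp (.iconj φ (.ineg ψ)) (botF p)) := by
            apply Deriv.iIImp
            set Γ₃ : Set (SForm A) := insert (.iconj φ (.ineg ψ)) (safePart Γ₂) with hG3
            have hβ₃ : betaF p S T ∈ Γ₃ :=
              Set.mem_insert_of_mem _ (mem_safePart (Set.mem_insert _ _) (safe_base _))
            have hφ : Deriv p Γ₃ φ := .eIConj₁ (.hyp (Set.mem_insert _ _))
            have hnψ : Deriv p Γ₃ (.ineg ψ) := .eIConj₂ (.hyp (Set.mem_insert _ _))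
            refine xi_elim p S (pf.mp hφ) (fun d hd => ?_)
            refine xi_elim p S ((qnf.mp (hnψ.weaken (Set.subset_insert _ _))))
              (fun e he => ?_)
            by_cases hde : d = e
            · subst hde
              refine mu_sub_bot p S (fun hsub => hnex d hsub hd he) ?_
                (.hyp (Set.mem_insert_of_mem _ (Set.mem_insert _ _)))
              exact Set.mem_insert_of_mem _ (Set.mem_insert_of_mem _ hβ₃)
            · exact mu_mu_contra p S hde
                (.hyp (Set.mem_insert_of_mem _ (Set.mem_insert _ _)))
                (.hyp (Set.mem_insert _ _))
          exact .efq (dia_bot p hdia₂ himp)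
      · -- Ξ V ⟶ ¬(φ→ψ)
        refine thm_imp_intro (fun Γ hXi => ?_)
        refine xi_elim p S (.hyp hXi) (fun c hc => ?_)
        obtain ⟨hcne, d, hdT, hdφ, hdψ⟩ := (mem_Df_iimp S).1 hc
        have hdne : d.Nonempty := ((mem_XfF S).1 hdφ).1
        have hdiaMu : Deriv p (insert (MuF p S c) Γ) (dia p (MuF p S d)) :=
          dia_mu p S hdne (fun f hf => mu_dia p S (hdT hf) (.hyp (Set.mem_insert _ _)))
        have hthm : Thm p (.iimp (MuF p S d) (.iconj φ (.ineg ψ))) := by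
          refine thm_imp_intro (fun Γ' hμ => ?_)
          exact .iIConj (pb.mp (xi_intro p S hdφ (.hyp hμ)))
            (qnb.mp (xi_intro p S hdψ (.hyp hμ)))
        exact .negImp₂ (dia_mono p hthm hdiaMu)

end Normal
section Final

theorem consistency_key (p : A) (S : Finset A) (Δ : Finset (SForm A))
    (hat : ∀ ψ ∈ Δ, ∀ a ∈ ψ.atomsL, a ∈ S)
    (hgood : ¬ ∃ c : Finset (Wd S), c.Nonempty ∧ ∀ ψ ∈ Δ, Assert (CtxF S c) ψ) :
    ∀ (l : List (SForm A)), (∀ ψ ∈ l, ψ ∈ Δ) →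
      ∀ (Γ : Set (SForm A)), (↑Δ ⊆ Γ) → ∀ c : Finset (Wd S),
        (MuF p S c ∈ Γ) → c.Nonempty → (∀ ψ ∈ Δ, ψ ∉ l → Assert (CtxF S c) ψ) →
        Deriv p Γ (botF p) := by
  intro l
  induction l with
  | nil =>
      intro _ Γ hΓ c hμ hcne hA
      exact absurd ⟨c, hcne, fun ψ hψ => hA ψ hψ (by simp)⟩ hgood
  | cons ψ l ih =>
      intro hl Γ hΓ c hμ hcne hA
      have hψΔ : ψ ∈ Δ := hl ψ (by simp)
      have hXi : Deriv p Γ (XiF p S (XfF S ψ)) :=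
        ((normal_form p S ψ (hat ψ hψΔ)).1.1).mp (.hyp (hΓ hψΔ))
      refine xi_elim p S hXi (fun d hd => ?_)
      by_cases hdc : d = c
      · subst hdc
        refine ih (fun χ hχ => hl χ (by simp [hχ])) _
          (fun χ hχ => Set.mem_insert_of_mem _ (hΓ hχ)) d (Set.mem_insert _ _) hcne ?_
        intro χ hχ hχl
        by_cases hχψ : χ = ψ
        · subst hχψ
          exact ((mem_XfF S).1 hd).2
        · exact hA χ hχ (by simp [hχψ, hχl])
      · exact mu_mu_contra p S hdc (.hyp (Set.mem_insert _ _))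
          (.hyp (Set.mem_insert_of_mem _ hμ))

end Final

theorem consistent_finite_set_has_model (p : A) (Δ : Finset (SForm A))
    (h : ¬ Deriv p (↑Δ) (botF p)) :
    ∃ C : Context A, C.Nonempty ∧ ∀ ψ ∈ Δ, Assert C ψ := by
  classical
  set S : Finset A := Δ.sup (fun ψ => ψ.atomsL.toFinset) with hS
  have hat : ∀ ψ ∈ Δ, ∀ a ∈ ψ.atomsL, a ∈ S := by
    intro ψ hψ a ha
    have hsub : ψ.atomsL.toFinset ⊆ S := Finset.le_sup (f := fun ψ => ψ.atomsL.toFinset) hψ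
    exact hsub (List.mem_toFinset.2 ha)
  by_cases hgood : ∃ c : Finset (Wd S), c.Nonempty ∧ ∀ ψ ∈ Δ, Assert (CtxF S c) ψ
  · obtain ⟨c, hcne, hcA⟩ := hgood
    exact ⟨CtxF S c, ctxF_nonempty S hcne, hcA⟩
  · exfalso
    apply h
    refine xi_elim p S (xiFull p S) (fun c hc => ?_)
    refine consistency_key p S Δ hat hgood Δ.toList
      (fun ψ hψ => Finset.mem_toList.1 hψ) _ (Set.subset_insert _ _) c
      (Set.mem_insert _ _) ((mem_FullX S).1 hc) ?_
    intro ψ hψ hnl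
    exact absurd (Finset.mem_toList.2 hψ) hnl

end LAD
end
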